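/- arXiv:2601.17174 — 7 statements merged into one kernel-verified Lean document; each statement's English description precedes it below -/
import Mathlib

section
/- The polynomials T_n(x) defined by T_0(x) = 1 and T_n(x) = x·T_{n-1}(x) + 2x·T'_{n-1}(x) have only real roots; moreover the roots of T_{n-1} interlace the roots of T_n for n ≥ 2. -/
open Polynomial

/-- The block-generating polynomials of type B set partitions without zero block:
`T_0 = 1`, `T_n(x) = x T_{n-1}(x) + 2x T'_{n-1}(x)`. -/
noncomputable def T : ℕ → Polynomial ℝ
  | 0 => 1
  | n + 1 => X * T n + 2 * X * derivative (T n)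

/-- The sorted (with multiplicity) list of real roots of a real polynomial. -/
noncomputable def sortedRoots (f : Polynomial ℝ) : List ℝ := f.roots.sort (· ≤ ·)

/-- `f` interlaces `g`: `deg f + 1 = deg g` and, writing the sorted real roots of `f` as
`f_1 ≤ ... ≤ f_{d-1}` and those of `g` as `g_1 ≤ ... ≤ g_d`, we have
`g_1 ≤ f_1 ≤ g_2 ≤ ... ≤ f_{d-1} ≤ g_d`. -/
def Interlaces (f g : Polynomial ℝ) : Prop :=
  f.natDegree + 1 = g.natDegree ∧
  ∀ i, i + 1 < (sortedRoots g).length →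
    (sortedRoots g).getD i 0 ≤ (sortedRoots f).getD i 0 ∧
    (sortedRoots f).getD i 0 ≤ (sortedRoots g).getD (i + 1) 0

/-!
Since `T_{n+1} = X (T_n + 2 T_n')`, everything follows from one fact about the operator
`f ↦ f + a f'` with `a > 0`: if `f` is monic with simple real roots `g_0 < ⋯ < g_m`, then
`f + a f'` equals `a f'(g_i)` at `g_i`, of sign `(-1)^(m-i)`, and has sign `(-1)^(m+1)` near `-∞`.
The intermediate value theorem gives a root in each of `(-∞, g_0), (g_0, g_1), …, (g_{m-1}, g_m)`,
and as `f + a f'` is monic of degree `m + 1` these are all its roots.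
Starting from `T_1 = X`, the roots of `T_{n+1}` are therefore simple, with largest root `0`, and the
roots of `T_{n+2}` are those of `T_{n+1} + 2 T_{n+1}'` together with `0`; they interlace those of
`T_{n+1}`.
-/

open Finset Filter Asymptotics

theorem neg_one_pow_card_Ioi_mul_prod_erase_sub_pos {n : ℕ} {g : Fin n → ℝ} (hg : StrictMono g)
    (i : Fin n) : 0 < (-1) ^ #(Ioi i) * ∏ j ∈ univ.erase i, (g i - g j) := by
  have hsplit : univ.erase i = Iio i ∪ Ioi i := by
    ext j
    simp
  have hdisj : Disjoint (Iio i) (Ioi i) :=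
    disjoint_left.2 fun j hj hj' => (mem_Iio.1 hj).asymm (mem_Ioi.1 hj')
  have hIoi : (-1) ^ #(Ioi i) * ∏ j ∈ Ioi i, (g i - g j) = ∏ j ∈ Ioi i, (g j - g i) := by
    rw [← prod_neg]
    simp only [neg_sub]
  rw [hsplit, prod_union hdisj, mul_left_comm, hIoi]
  exact mul_pos (prod_pos fun j hj => sub_pos.2 (hg (mem_Iio.1 hj)))
    (prod_pos fun j hj => sub_pos.2 (hg (mem_Ioi.1 hj)))

theorem mul_neg_of_neg_one_pow_mul_pos {k : ℕ} {x y : ℝ} (hx : 0 < (-1) ^ (k + 1) * x)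
    (hy : 0 < (-1) ^ k * y) : x * y < 0 := by
  have hsq : ((-1 : ℝ) ^ k) ^ 2 = 1 := by rw [← pow_mul, pow_mul', neg_one_sq, one_pow]
  rw [pow_succ] at hx
  nlinarith [mul_pos hx hy]

namespace Polynomial

section ProdXSubC

variable {R ι : Type*} [CommRing R] [Fintype ι]

theorem prod_X_sub_C_eq_multiset_prod (g : ι → R) :
    ∏ i, (X - C (g i)) = ((univ.val.map g).map fun a => X - C a).prod := by
  rw [prod_eq_multiset_prod, Multiset.map_map]
  rfl

theorem roots_prod_univ_X_sub_C [IsDomain R] (g : ι → R) :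
    (∏ i, (X - C (g i))).roots = univ.val.map g := by
  rw [prod_X_sub_C_eq_multiset_prod, roots_multiset_prod_X_sub_C]

theorem natDegree_prod_univ_X_sub_C [Nontrivial R] (g : ι → R) :
    (∏ i, (X - C (g i))).natDegree = Fintype.card ι := by
  rw [prod_X_sub_C_eq_multiset_prod, natDegree_multiset_prod_X_sub_C_eq_card]
  simp

theorem eval_derivative_prod_univ_X_sub_C [DecidableEq ι] (g : ι → R) (i : ι) :
    (derivative (∏ j, (X - C (g j)))).eval (g i) = ∏ j ∈ univ.erase i, (g i - g j) := by
  rw [derivative_prod_finset, eval_finsetSum, sum_eq_single i]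
  · simp [eval_prod]
  · intro k _ hki
    simp [eval_prod, prod_eq_zero (mem_erase.2 ⟨Ne.symm hki, mem_univ i⟩)]
  · simp

theorem eq_prod_X_sub_C_of_injective [IsDomain R] {p : R[X]} (hp : p.Monic) {s : ι → R}
    (hdeg : p.natDegree = Fintype.card ι) (hs : Function.Injective s)
    (hroot : ∀ i, p.IsRoot (s i)) : p = ∏ i, (X - C (s i)) := by
  have hle : univ.val.map s ≤ p.roots := by
    rw [Multiset.le_iff_subset (univ.nodup.map hs)]
    intro a ha
    obtain ⟨i, -, rfl⟩ := Multiset.mem_map.1 ha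
    exact (mem_roots hp.ne_zero).2 (hroot i)
  have hroots : univ.val.map s = p.roots :=
    Multiset.eq_of_le_of_card_le hle (by simpa [hdeg] using p.card_roots')
  rw [prod_X_sub_C_eq_multiset_prod, hroots,
    prod_multiset_X_sub_C_of_monic_of_roots_card_eq hp (by rw [← hroots]; simp [hdeg])]

end ProdXSubC

theorem Monic.eventually_atBot_neg_one_pow_natDegree_mul_eval_pos {p : ℝ[X]} (hp : p.Monic) :
    ∀ᶠ x in atBot, 0 < (-1) ^ p.natDegree * p.eval x := by
  have h := (IsEquivalent.refl (u := fun _ : ℝ => (-1 : ℝ) ^ p.natDegree)).mul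
    p.isEquivalent_atBot_lead
  refine h.eventually_pos ((eventually_lt_atBot 0).mono fun x hx => ?_)
  simpa [hp.leadingCoeff, ← mul_assoc, ← mul_pow] using pow_pos (neg_pos.2 hx) _

theorem exists_mem_Ioo_isRoot_of_eval_mul_neg (p : ℝ[X]) {a b : ℝ} (hab : a ≤ b)
    (h : p.eval a * p.eval b < 0) : ∃ x ∈ Set.Ioo a b, p.IsRoot x := by
  have hcont : ContinuousOn (p.eval ·) (Set.Icc a b) := p.continuous.continuousOn
  rcases mul_neg_iff.1 h with ⟨ha, hb⟩ | ⟨ha, hb⟩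
  · exact intermediate_value_Ioo' hab hcont ⟨hb, ha⟩
  · exact intermediate_value_Ioo hab hcont ⟨ha, hb⟩

theorem exists_eq_prod_X_sub_C_of_eval_mul_neg {p : ℝ[X]} (hp : p.Monic) {m : ℕ}
    (hdeg : p.natDegree = m) {c : Fin (m + 1) → ℝ} (hc : StrictMono c)
    (halt : ∀ k : Fin m, p.eval (c k.castSucc) * p.eval (c k.succ) < 0) :
    ∃ s : Fin m → ℝ, p = ∏ k, (X - C (s k)) ∧ ∀ k, c k.castSucc < s k ∧ s k < c k.succ := by
  choose s hs hroot using fun k =>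
    p.exists_mem_Ioo_isRoot_of_eval_mul_neg (hc Fin.castSucc_lt_succ).le (halt k)
  have hmono : StrictMono s := fun i j hij =>
    (hs i).2.trans ((hc.monotone (Fin.succ_le_castSucc_iff.2 hij)).trans_lt (hs j).1)
  exact ⟨s, eq_prod_X_sub_C_of_injective hp (by simp [hdeg]) hmono.injective hroot, hs⟩

theorem exists_interlacing_roots_add_C_mul_derivative {m : ℕ} {g : Fin (m + 1) → ℝ}
    (hg : StrictMono g) {a : ℝ} (ha : 0 < a) :
    ∃ s : Fin (m + 1) → ℝ,
      ∏ i, (X - C (g i)) + C a * derivative (∏ i, (X - C (g i))) = ∏ i, (X - C (s i)) ∧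
      (∀ k, s k < g k) ∧ ∀ k : Fin m, g k.castSucc < s k.succ := by
  set f := ∏ i, (X - C (g i))
  have hf : f.Monic := monic_prod_of_monic _ _ fun i _ => monic_X_sub_C (g i)
  have hlt : (C a * derivative f).degree < f.degree :=
    (degree_C_mul ha.ne').trans_lt (degree_derivative_lt hf.ne_zero)
  set h := f + C a * derivative f
  have hh : h.Monic := hf.add_of_left hlt
  have hdeg : h.natDegree = m + 1 := by
    rw [natDegree_add_eq_left_of_degree_lt hlt, natDegree_prod_univ_X_sub_C, Fintype.card_fin]
  have hsign : ∀ i, 0 < (-1) ^ #(Ioi i) * h.eval (g i) := fun i => by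
    have hfi : f.eval (g i) = 0 := by simp [f, eval_prod, prod_eq_zero (mem_univ i)]
    rw [eval_add, eval_mul, eval_C, hfi, zero_add, eval_derivative_prod_univ_X_sub_C,
      mul_left_comm]
    exact mul_pos ha (neg_one_pow_card_Ioi_mul_prod_erase_sub_pos hg i)
  obtain ⟨x₀, hx₀, hx₀g⟩ :=
    (hh.eventually_atBot_neg_one_pow_natDegree_mul_eval_pos.and (eventually_lt_atBot (g 0))).exists
  rw [hdeg] at hx₀
  have hc : StrictMono (Fin.cons x₀ g : Fin (m + 2) → ℝ) := by
    refine Fin.strictMono_iff_lt_succ.2 fun k => ?_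
    cases k using Fin.cases with
    | zero => simpa using hx₀g
    | succ j => simpa [← Fin.succ_castSucc] using hg Fin.castSucc_lt_succ
  have halt : ∀ k : Fin (m + 1), h.eval ((Fin.cons x₀ g : Fin (m + 2) → ℝ) k.castSucc) *
      h.eval ((Fin.cons x₀ g : Fin (m + 2) → ℝ) k.succ) < 0 := by
    intro k
    cases k using Fin.cases with
    | zero => exact mul_neg_of_neg_one_pow_mul_pos hx₀ (by simpa using hsign 0)
    | succ j =>
      have hcard : #(Ioi j.castSucc) = #(Ioi j.succ) + 1 := by
        simp only [Fin.card_Ioi, Fin.val_castSucc, Fin.val_succ]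
        omega
      simpa [← Fin.succ_castSucc] using
        mul_neg_of_neg_one_pow_mul_pos (hcard ▸ hsign j.castSucc) (hsign j.succ)
  obtain ⟨s, hprod, hs⟩ := exists_eq_prod_X_sub_C_of_eval_mul_neg hh hdeg hc halt
  exact ⟨s, hprod, fun k => by simpa using (hs k).2,
    fun k => by simpa [← Fin.succ_castSucc] using (hs k.succ).1⟩

end Polynomial

theorem sortedRoots_prod_X_sub_C {n : ℕ} {g : Fin n → ℝ} (hg : Monotone g) :
    sortedRoots (∏ i, (X - C (g i))) = List.ofFn g := by
  rw [sortedRoots, roots_prod_univ_X_sub_C, Fin.univ_val_map, Multiset.coe_sort]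
  exact List.mergeSort_eq_self _ (List.pairwise_ofFn.2 fun _ _ h => by simpa using hg h.le)

theorem interlaces_prod_X_sub_C {m : ℕ} {g : Fin m → ℝ} {t : Fin (m + 1) → ℝ}
    (hg : Monotone g) (ht : Monotone t) (h : ∀ i, t i.castSucc ≤ g i ∧ g i ≤ t i.succ) :
    Interlaces (∏ i, (X - C (g i))) (∏ i, (X - C (t i))) := by
  refine ⟨by simp, fun i hi => ?_⟩
  simp only [sortedRoots_prod_X_sub_C hg, sortedRoots_prod_X_sub_C ht, List.length_ofFn] at hi ⊢
  rw [List.getD_eq_getElem _ _ (by simp; omega), List.getD_eq_getElem _ _ (by simp; omega),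
    List.getD_eq_getElem _ _ (by simp; omega)]
  simp only [List.getElem_ofFn]
  exact h ⟨i, by omega⟩

theorem T_succ (n : ℕ) : T (n + 1) = X * (T n + C 2 * derivative (T n)) := by
  rw [T, C_ofNat]
  ring

theorem exists_T_succ_succ_eq_prod {n : ℕ} {g : Fin (n + 1) → ℝ} (hg : StrictMono g)
    (hlast : g (Fin.last n) = 0) (hT : T (n + 1) = ∏ i, (X - C (g i))) :
    ∃ t : Fin (n + 2) → ℝ, StrictMono t ∧ t (Fin.last (n + 1)) = 0 ∧
      T (n + 2) = ∏ i, (X - C (t i)) ∧ ∀ i, t i.castSucc ≤ g i ∧ g i ≤ t i.succ := by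
  obtain ⟨s, hprod, hsg, hgs⟩ := exists_interlacing_roots_add_C_mul_derivative hg two_pos
  have hs : StrictMono s := Fin.strictMono_iff_lt_succ.2 fun k =>
    (hsg k.castSucc).trans (hgs k)
  refine ⟨Fin.snoc s 0, ?_, Fin.snoc_last _ _, ?_, fun i => ⟨?_, ?_⟩⟩
  · refine Fin.strictMono_iff_lt_succ.2 fun k => ?_
    cases k using Fin.lastCases with
    | last => simpa [hlast] using hsg (Fin.last n)
    | cast j =>
      rw [Fin.succ_castSucc, Fin.snoc_castSucc, Fin.snoc_castSucc]
      exact hs Fin.castSucc_lt_succ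
  · rw [T_succ, hT, hprod, Fin.prod_univ_castSucc (n := n + 1)]
    simp [mul_comm]
  · simpa using (hsg i).le
  · cases i using Fin.lastCases with
    | last => simp [hlast]
    | cast j =>
      rw [Fin.succ_castSucc, Fin.snoc_castSucc]
      exact (hgs j).le

theorem exists_T_succ_eq_prod (n : ℕ) :
    ∃ g : Fin (n + 1) → ℝ, StrictMono g ∧ g (Fin.last n) = 0 ∧ T (n + 1) = ∏ i, (X - C (g i)) := by
  induction n with
  | zero => exact ⟨0, Fin.strictMono_iff_lt_succ.2 fun k => k.elim0, rfl, by simp [T]⟩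
  | succ n ih =>
    obtain ⟨g, hg, hlast, hT⟩ := ih
    obtain ⟨t, ht, htlast, hT', -⟩ := exists_T_succ_succ_eq_prod hg hlast hT
    exact ⟨t, ht, htlast, hT'⟩

/-- Each `T_n` has only real roots (all `natDegree` of its roots are real, counted
with multiplicity), and the roots of `T_{n-1}` interlace the roots of `T_n` for n ≥ 2. -/
theorem T_real_rooted_and_interlacing :
    (∀ n, (T n).roots.card = (T n).natDegree) ∧
    (∀ n, 2 ≤ n → Interlaces (T (n - 1)) (T n)) := by
  refine ⟨fun n => ?_, fun n hn => ?_⟩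
  · cases n with
    | zero => simp [T]
    | succ n =>
      obtain ⟨g, -, -, hT⟩ := exists_T_succ_eq_prod n
      simp [hT, roots_prod_univ_X_sub_C]
  · obtain ⟨m, rfl⟩ : ∃ m, n = m + 2 := ⟨n - 2, by omega⟩
    obtain ⟨g, hg, hlast, hT⟩ := exists_T_succ_eq_prod m
    obtain ⟨t, ht, -, hT', hinter⟩ := exists_T_succ_succ_eq_prod hg hlast hT
    rw [show m + 2 - 1 = m + 1 by omega, hT, hT']
    exact interlaces_prod_X_sub_C hg.monotone ht.monotone hinter
end

section
/- Let C_1, C_2 > 0 be real numbers and define polynomials P_n(t) by P_0(t) = c_{0,0}, P_1(t) = c_{1,1}t + c_{1,0} (with c_{0,0}, c_{1,0}, c_{1,1} ≥ 0, c_{1,1} > 0), and P_n(t) = C_1·t·P'_{n-1}(t) + C_2·(n-2)·t·P_{n-2}(t) for n ≥ 2. Then every P_n(t) has only real zeros. -/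
/-!
For `n ≥ 2` write `P n = X * f n`; the recurrence becomes
`f (n + 1) = C₁ (X f n)' + C₂ (n - 1) X f (n - 1)`. By induction the roots of `f n` and of
`f (n - 1)` are simple and negative, and they interlace. At the roots `w₀ > w₁ > ⋯` of `f n`, both
`(X f n)' (w_j) = w_j f n' (w_j)` and `w_j f (n - 1) (w_j)` have sign `(-1)^(j+1)`, while
`f (n + 1) (0) > 0`. So `f (n + 1)` alternates in sign along `0 > w₀ > w₁ > ⋯`, and together with
its sign near `-∞` the intermediate value theorem gives it as many interlacing roots as its degree.
-/

open Polynomial Finset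

section Sign

variable {R : Type*} [CommRing R] [LinearOrder R] [IsStrictOrderedRing R]

lemma neg_one_pow_card_filter_mul_prod_pos {ι : Type*} {s : Finset ι} {g : ι → R}
    (p : ι → Prop) [DecidablePred p] (hneg : ∀ i ∈ s, p i → g i < 0)
    (hpos : ∀ i ∈ s, ¬ p i → 0 < g i) :
    0 < (-1) ^ #(s.filter p) * ∏ i ∈ s, g i := by
  rw [← prod_filter_mul_prod_filter_not s p, ← mul_assoc, ← prod_neg]
  refine mul_pos (prod_pos fun i hi => ?_) (prod_pos fun i hi => ?_)
  · rw [mem_filter] at hi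
    exact neg_pos.2 (hneg i hi.1 hi.2)
  · rw [mem_filter] at hi
    exact hpos i hi.1 hi.2

lemma neg_one_pow_mul_prod_sub_pos {s : Finset ℕ} {u : ℕ → R} {x : R} {j : ℕ}
    (hs : s.filter (· < j) = range j) (hlt : ∀ i ∈ s, i < j → x < u i)
    (hgt : ∀ i ∈ s, j ≤ i → u i < x) :
    0 < (-1) ^ j * ∏ i ∈ s, (x - u i) := by
  simpa [hs] using neg_one_pow_card_filter_mul_prod_pos (s := s) (g := fun i => x - u i) (· < j)
    (fun i hi hij => sub_neg.2 (hlt i hi hij))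
    (fun i hi hij => sub_pos.2 (hgt i hi (not_lt.1 hij)))

lemma neg_one_pow_mul_prod_range_sub_pos {w : ℕ → R} {m j : ℕ} {x : R}
    (hw : StrictAntiOn w (Set.Iio m)) (hj : j ≤ m) (hlt : 0 < j → x < w (j - 1))
    (hgt : j < m → w j < x) :
    0 < (-1) ^ j * ∏ i ∈ range m, (x - w i) := by
  refine neg_one_pow_mul_prod_sub_pos (by ext i; simp only [mem_filter, mem_range]; omega)
    (fun i hi hij => (hlt (Nat.zero_lt_of_lt hij)).trans_le ?_) (fun i hi hij => ?_)
  · exact hw.antitoneOn (mem_range.1 hi) (by simp; omega) (by omega)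
  · have hjm : j < m := hij.trans_lt (mem_range.1 hi)
    exact (hw.antitoneOn hjm (mem_range.1 hi) hij).trans_lt (hgt hjm)

lemma neg_one_pow_mul_eval_derivative_prod_X_sub_C_pos {w : ℕ → R} {m j : ℕ}
    (hw : StrictAntiOn w (Set.Iio m)) (hj : j < m) :
    0 < (-1) ^ j * eval (w j) (derivative (∏ i ∈ range m, (X - C (w i)))) := by
  rw [← mul_prod_erase _ _ (mem_range.2 hj), derivative_mul]
  simp only [derivative_sub, derivative_X, derivative_C, sub_zero, one_mul, eval_add, eval_mul,
    eval_sub, eval_X, eval_C, sub_self, zero_mul, add_zero, eval_prod]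
  refine neg_one_pow_mul_prod_sub_pos ?_ (fun i hi hij => ?_) (fun i hi hij => ?_)
  · ext i; simp only [mem_filter, mem_erase, mem_range]; omega
  · exact hw (mem_range.1 (mem_of_mem_erase hi)) hj hij
  · exact hw hj (mem_range.1 (mem_of_mem_erase hi)) (lt_of_le_of_ne hij (ne_of_mem_erase hi).symm)

lemma natDegree_add_eq_max_of_leadingCoeff_pos {p q : R[X]} (hp : 0 < p.leadingCoeff)
    (hq : 0 < q.leadingCoeff) :
    (p + q).natDegree = max p.natDegree q.natDegree ∧ 0 < (p + q).leadingCoeff := by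
  rcases lt_trichotomy p.degree q.degree with h | h | h
  · rw [natDegree_add_eq_right_of_degree_lt h, leadingCoeff_add_of_degree_lt h,
      max_eq_right (natDegree_le_natDegree h.le)]
    exact ⟨rfl, hq⟩
  · have hlc := add_pos hp hq
    have hdeg := degree_add_eq_of_leadingCoeff_add_ne_zero hlc.ne'
    rw [← h, max_self] at hdeg
    rw [leadingCoeff_add_of_degree_eq h hlc.ne', natDegree_eq_of_degree_eq hdeg,
      natDegree_eq_natDegree h, max_self]
    exact ⟨rfl, hlc⟩
  · rw [natDegree_add_eq_left_of_degree_lt h, leadingCoeff_add_of_degree_lt' h,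
      max_eq_left (natDegree_le_natDegree h.le)]
    exact ⟨rfl, hp⟩

end Sign

lemma eq_C_leadingCoeff_mul_prod_X_sub_C {R : Type*} [CommRing R] [IsDomain R] {F : R[X]}
    {z : ℕ → R} (hz : Set.InjOn z (Set.Iio F.natDegree))
    (hroot : ∀ j < F.natDegree, F.IsRoot (z j)) :
    F = C F.leadingCoeff * ∏ j ∈ range F.natDegree, (X - C (z j)) := by
  classical
  rcases eq_or_ne F 0 with rfl | hF
  · simp
  have hinj : Set.InjOn z (range F.natDegree) := by simpa [Set.InjOn] using hz
  set S := (range F.natDegree).image z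
  have hle : S.val ≤ F.roots :=
    (Multiset.le_iff_subset S.nodup).2 fun x hx => by
      obtain ⟨j, hj, rfl⟩ := mem_image.1 (mem_def.2 hx)
      exact (mem_roots hF).2 (hroot j (mem_range.1 hj))
  have hcard : #S = F.natDegree := by rw [card_image_of_injOn hinj, card_range]
  have hroots : S.val = F.roots := Multiset.eq_of_le_of_card_le hle (by
    rw [← card_val] at hcard; rw [hcard]; exact F.card_roots')
  have hF := C_leadingCoeff_mul_prod_multiset_X_sub_C (p := F) (by rw [← hroots]; exact hcard)
  rw [← hroots, ← Finset.prod_eq_multiset_prod, prod_image hinj] at hF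
  exact hF.symm

lemma exists_isRoot_of_sign_alternation {F : ℝ[X]} {b : ℕ → ℝ} {n : ℕ}
    (hb : ∀ j < n, b (j + 1) ≤ b j) (hs : ∀ j ≤ n, 0 < (-1) ^ j * F.eval (b j)) :
    ∃ z : ℕ → ℝ, ∀ j < n, z j ∈ Set.Ioo (b (j + 1)) (b j) ∧ F.IsRoot (z j) := by
  have (j : ℕ) (hj : j < n) : ∃ x ∈ Set.Ioo (b (j + 1)) (b j), F.IsRoot x := by
    have hlo : (C ((-1) ^ j) * F).eval (b (j + 1)) < 0 := by
      have := hs (j + 1) hj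
      simp only [eval_mul, eval_C, pow_succ] at this ⊢
      linarith
    have hhi : 0 < (C ((-1) ^ j) * F).eval (b j) := by simpa using hs j hj.le
    obtain ⟨x, hx, hroot⟩ :=
      intermediate_value_Ioo (hb j hj) (C ((-1) ^ j) * F).continuousOn ⟨hlo, hhi⟩
    exact ⟨x, hx, by simpa [IsRoot] using hroot⟩
  choose! z hz using this
  exact ⟨z, hz⟩

lemma exists_lt_neg_one_pow_natDegree_mul_eval_pos {F : ℝ[X]} (hdeg : 0 < F.natDegree)
    (hlc : 0 < F.leadingCoeff) (y : ℝ) :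
    ∃ x < y, 0 < (-1) ^ F.natDegree * F.eval x := by
  set G := C ((-1) ^ F.natDegree) * F.comp (-X)
  have hGlc : G.leadingCoeff = F.leadingCoeff := by
    simp [G, ← mul_assoc, ← pow_add, ← two_mul, pow_mul]
  have hGdeg : 0 < G.degree := by
    rw [degree_C_mul (by simp), degree_comp_neg_X]
    exact natDegree_pos_iff_degree_pos.1 hdeg
  obtain ⟨x, hx, hy⟩ := ((G.tendsto_atTop_of_leadingCoeff_nonneg hGdeg (hGlc ▸ hlc.le)).eventually
    (Filter.eventually_gt_atTop 0) |>.and (Filter.eventually_gt_atTop (-y))).exists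
  exact ⟨-x, by linarith, by simpa [G] using hx⟩

lemma natDegree_C_mul_derivative_X_mul_add {f g : ℝ[X]} {c β : ℝ} (hc : 0 < c) (hβ : 0 < β)
    (hf : 0 < f.leadingCoeff) (hg : 0 < g.leadingCoeff) (hfg : f.natDegree ≤ g.natDegree + 1) :
    (C c * derivative (X * f) + C β * (X * g)).natDegree = g.natDegree + 1 ∧
      0 < (C c * derivative (X * f) + C β * (X * g)).leadingCoeff := by
  have hf0 : f ≠ 0 := by rintro rfl; simp at hf
  have hg0 : g ≠ 0 := by rintro rfl; simp at hg
  have h := natDegree_add_eq_max_of_leadingCoeff_pos (p := C c * derivative (X * f))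
    (q := C β * (X * g))
    (by rw [leadingCoeff_mul, leadingCoeff_derivative, leadingCoeff_C, leadingCoeff_mul,
      leadingCoeff_X, natDegree_X_mul hf0]; positivity)
    (by rw [leadingCoeff_mul, leadingCoeff_C, leadingCoeff_mul, leadingCoeff_X]; positivity)
  rw [natDegree_C_mul hc.ne', natDegree_C_mul hβ.ne', natDegree_derivative, natDegree_X_mul hf0,
    natDegree_X_mul hg0, Nat.add_sub_cancel, max_eq_right hfg] at h
  exact h

lemma neg_one_pow_mul_eval_step_pos {m : ℕ} {a c β : ℝ} {w : ℕ → ℝ} {g : ℝ[X]} (ha : 0 < a)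
    (hc : 0 < c) (hβ : 0 < β) (hw : StrictAntiOn w (Set.Iio m)) (hwneg : ∀ i < m, w i < 0)
    (hg : ∀ j < m, 0 < (-1) ^ j * g.eval (w j)) {j : ℕ} (hj : j ≤ m) :
    0 < (-1) ^ j * (C c * derivative (X * (C a * ∏ i ∈ range m, (X - C (w i)))) +
      C β * (X * g)).eval (if j = 0 then 0 else w (j - 1)) := by
  have hU (x : ℝ) : (∏ i ∈ range m, (X - C (w i))).eval x = ∏ i ∈ range m, (x - w i) := by
    simp [eval_prod]
  cases j with
  | zero =>
    simp only [pow_zero, ↓reduceIte, derivative_mul, derivative_X, one_mul, derivative_C, zero_mul,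
      zero_add, eval_add, eval_mul, eval_C, hU, zero_sub, eval_X, add_zero, mul_zero]
    exact mul_pos hc (mul_pos ha (prod_pos fun i hi => neg_pos.2 (hwneg i (mem_range.1 hi))))
  | succ j =>
    have hj : j < m := by omega
    have hroot : (∏ i ∈ range m, (X - C (w i))).eval (w j) = 0 := by
      rw [hU]; exact prod_eq_zero (mem_range.2 hj) (sub_self _)
    have hU' := neg_one_pow_mul_eval_derivative_prod_X_sub_C_pos hw hj
    have hg' := hg j hj
    have hwj := hwneg j hj
    simp only [eval_add, eval_mul, eval_C, derivative_mul, derivative_X, derivative_C, eval_X,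
      hroot, Nat.add_sub_cancel, Nat.succ_ne_zero, if_false, eval_zero, eval_one]
    rw [pow_succ]
    nlinarith [mul_pos (mul_pos hc ha) hU', mul_pos hβ hg']

lemma exists_roots_between_of_sign_alternation {F : ℝ[X]} {w : ℕ → ℝ} {m : ℕ}
    (hw : StrictAntiOn w (Set.Iio m)) (hwneg : ∀ i < m, w i < 0)
    (hdeg : F.natDegree = m ∨ F.natDegree = m + 1) (hlc : 0 < F.leadingCoeff)
    (hsign : ∀ j ≤ m, 0 < (-1) ^ j * F.eval (if j = 0 then 0 else w (j - 1))) :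
    ∃ z : ℕ → ℝ, StrictAntiOn z (Set.Iio F.natDegree) ∧ ∀ j < F.natDegree, F.IsRoot (z j) ∧
      z j < (if j = 0 then 0 else w (j - 1)) ∧ (j < m → w j < z j) := by
  set p : ℕ → ℝ := fun j => if j = 0 then 0 else w (j - 1)
  set n := F.natDegree
  obtain ⟨x, hx, hxF⟩ : ∃ x < p m, n = m + 1 → 0 < (-1) ^ n * F.eval x := by
    by_cases hn : n = m + 1
    · obtain ⟨x, hx, hxF⟩ := exists_lt_neg_one_pow_natDegree_mul_eval_pos (by omega) hlc (p m)
      exact ⟨x, hx, fun _ => hxF⟩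
    · exact ⟨p m - 1, by linarith, fun h => absurd h hn⟩
  set b : ℕ → ℝ := fun j => if j ≤ m then p j else x
  have hb_le (j : ℕ) (hj : j ≤ m) : b j = p j := if_pos hj
  have hb : ∀ j < n, b (j + 1) < b j := by
    intro j hj
    rcases Nat.lt_or_ge j m with hjm | hjm
    · rw [hb_le (j + 1) hjm, hb_le j hjm.le]
      rcases j with _ | j
      · simpa [p] using hwneg 0 hjm
      · simpa [p] using hw (by simp; omega) (by simp; omega) (Nat.lt_succ_self j)
    · obtain rfl : j = m := by omega
      simpa [b] using hx
  have hbF : ∀ j ≤ n, 0 < (-1) ^ j * F.eval (b j) := by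
    intro j hj
    rcases Nat.lt_or_ge m j with hmj | hjm
    · obtain rfl : j = n := by omega
      simpa [b, Nat.not_le.2 hmj] using hxF (by omega)
    · exact hb_le j hjm ▸ hsign j hjm
  obtain ⟨z, hz⟩ := exists_isRoot_of_sign_alternation (fun j hj => (hb j hj).le) hbF
  refine ⟨z, (strictAntiOn_Iic_of_succ_lt (n := n - 1) fun j hj =>
    ((hz (j + 1) (by omega)).1.2.trans (hz j (by omega)).1.1)).mono
    fun j hj => Nat.le_sub_one_of_lt hj, fun j hj => ⟨(hz j hj).2, ?_, fun hjm => ?_⟩⟩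
  · simpa [hb_le j (by omega)] using (hz j hj).1.2
  · simpa [hb_le (j + 1) hjm, p] using (hz j hj).1.1

/-- `f = a ∏ (X - wᵢ)` with `0 > w₀ > ⋯ > w_{m-1}`, and `g`, of degree `m - 1` or `m`, alternates
in sign at the `wᵢ`: the sign form of "the roots of `g` interlace those of `f`". -/
def Interlacing (f g : ℝ[X]) : Prop :=
  ∃ (m : ℕ) (a : ℝ) (w : ℕ → ℝ), 0 < a ∧ f = C a * ∏ i ∈ range m, (X - C (w i)) ∧
    StrictAntiOn w (Set.Iio m) ∧ (∀ i < m, w i < 0) ∧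
    0 < g.leadingCoeff ∧ g.natDegree ≤ m ∧ m ≤ g.natDegree + 1 ∧
    ∀ j < m, 0 < (-1) ^ j * g.eval (w j)

theorem Interlacing.step {f g : ℝ[X]} (h : Interlacing f g) {c β : ℝ} (hc : 0 < c)
    (hβ : 0 < β) : Interlacing (C c * derivative (X * f) + C β * (X * g)) f := by
  obtain ⟨m, a, w, ha, rfl, hw, hwneg, hglc, hgm, hmg, hgw⟩ := h
  set f := C a * ∏ i ∈ range m, (X - C (w i))
  have hfdeg : f.natDegree = m := by simp [f, natDegree_C_mul ha.ne']
  have hflc : f.leadingCoeff = a := by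
    simp [f, leadingCoeff_mul, (monic_prod_X_sub_C _ _).leadingCoeff]
  set F := C c * derivative (X * f) + C β * (X * g)
  obtain ⟨hFdeg, hFlc⟩ : F.natDegree = g.natDegree + 1 ∧ 0 < F.leadingCoeff :=
    natDegree_C_mul_derivative_X_mul_add hc hβ (hflc ▸ ha) hglc (hfdeg ▸ hmg)
  obtain ⟨z, hz_anti, hz⟩ := exists_roots_between_of_sign_alternation hw hwneg (by omega) hFlc
    fun j hj => neg_one_pow_mul_eval_step_pos ha hc hβ hw hwneg hgw hj
  refine ⟨F.natDegree, F.leadingCoeff, z, hFlc, eq_C_leadingCoeff_mul_prod_X_sub_C hz_anti.injOn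
    (fun j hj => (hz j hj).1), hz_anti, fun j hj => ?_, hflc ▸ ha, by omega, by omega,
    fun j hj => ?_⟩
  · refine (hz j hj).2.1.trans_le ?_
    split_ifs
    exacts [le_rfl, (hwneg _ (by omega)).le]
  · have := neg_one_pow_mul_prod_range_sub_pos hw (by omega)
      (fun hj0 => by simpa [hj0.ne'] using (hz j hj).2.1) (hz j hj).2.2
    simp only [f, eval_mul, eval_C, eval_prod, eval_sub, eval_X]
    nlinarith

lemma interlacing_C_mul_X_add_C_C {a b c : ℝ} (ha : 0 < a) (hb : 0 < b) (hc : 0 < c) :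
    Interlacing (C a * X + C b) (C c) := by
  refine ⟨1, a, fun _ => -(b / a), ha, ?_, by simp [StrictAntiOn], by simp; positivity,
    by simpa using hc, by simp, by simp, by simpa using hc⟩
  rw [prod_range_one, mul_sub, ← C_mul, mul_neg, mul_div_cancel₀ b ha.ne', map_neg, sub_neg_eq_add]

lemma Interlacing.splits_X_mul {f g : ℝ[X]} (h : Interlacing f g) : (X * f).Splits := by
  obtain ⟨m, a, w, -, rfl, -⟩ := h
  exact Splits.X.mul ((Splits.C a).mul (Splits.prod fun i _ => Splits.X_sub_C (w i)))

lemma im_eq_zero_of_mem_roots_map {p : ℝ[X]} (hp : p.Splits) {z : ℂ}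
    (hz : z ∈ (p.map (algebraMap ℝ ℂ)).roots) : z.im = 0 := by
  rw [hp.roots_map] at hz
  obtain ⟨r, -, rfl⟩ := Multiset.mem_map.1 hz
  exact Complex.ofReal_im r

lemma exists_interlacing_of_recurrence {C1 C2 : ℝ} (hC1 : 0 < C1) (hC2 : 0 < C2)
    {P : ℕ → ℝ[X]} (hrec : ∀ n, 2 ≤ n →
      P n = C C1 * X * derivative (P (n - 1)) + C (C2 * ((n : ℝ) - 2)) * X * P (n - 2))
    {f g : ℝ[X]} (hf : P 3 = X * f) (hg : P 2 = X * g) (hfg : Interlacing f g) (n : ℕ) :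
    ∃ f g, P (n + 3) = X * f ∧ P (n + 2) = X * g ∧ Interlacing f g := by
  induction n with
  | zero => exact ⟨f, g, hf, hg, hfg⟩
  | succ n ih =>
    obtain ⟨f, g, hf, hg, hfg⟩ := ih
    refine ⟨_, f, ?_, hf, hfg.step hC1 (β := C2 * ((n + 4 : ℕ) - 2)) (by push_cast; nlinarith)⟩
    rw [hrec (n + 4) (by omega), show n + 4 - 1 = n + 3 from rfl,
      show n + 4 - 2 = n + 2 from rfl, hf, hg]
    ring

theorem real_rooted_of_recurrence_general (C1 C2 : ℝ) (hC1 : 0 < C1) (hC2 : 0 < C2)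
    (c00 c10 c11 : ℝ) (h10 : 0 ≤ c10) (h11 : 0 < c11)
    (P : ℕ → Polynomial ℝ)
    (hP0 : P 0 = C c00)
    (hP1 : P 1 = C c11 * X + C c10)
    (hrec : ∀ n, 2 ≤ n →
      P n = C C1 * X * derivative (P (n - 1)) + C (C2 * ((n : ℝ) - 2)) * X * P (n - 2)) :
    ∀ n, ∀ z ∈ ((P n).map (algebraMap ℝ ℂ)).roots, z.im = 0 := by
  have hP2 : P 2 = X * C (C1 * c11) := by
    rw [hrec 2 le_rfl, hP1]
    simp only [derivative_add, derivative_mul, derivative_C, zero_mul, derivative_X, mul_one,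
      zero_add, add_zero, Nat.cast_ofNat, sub_self, mul_zero, map_zero, C_mul]
    ring
  have hP3 : P 3 = X * (C (C2 * c11) * X + C (C1 ^ 2 * c11 + C2 * c10)) := by
    rw [hrec 3 (by norm_num), show 3 - 1 = 2 from rfl, hP2, show 3 - 2 = 1 from rfl, hP1]
    simp only [C_mul, C_add, map_pow, derivative_mul, derivative_X, derivative_C]
    rw [show ((3 : ℕ) : ℝ) - 2 = 1 by norm_num, C_1]
    ring
  have key := exists_interlacing_of_recurrence hC1 hC2 hrec hP3 hP2
    (interlacing_C_mul_X_add_C_C (by positivity) (by positivity) (by positivity))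
  intro n z hz
  refine im_eq_zero_of_mem_roots_map ?_ hz
  match n with
  | 0 => exact hP0 ▸ Splits.C _
  | 1 => exact hP1 ▸ Splits.of_natDegree_le_one natDegree_linear_le
  | 2 => exact hP2 ▸ Splits.X.mul (Splits.C _)
  | n + 3 =>
    obtain ⟨f, g, hf, -, hfg⟩ := key n
    exact hf ▸ hfg.splits_X_mul

/-- Let `C₁, C₂ > 0` and let `P_n` be defined by `P_0 = c₀₀`, `P_1 = c₁₁ t + c₁₀`
(with `c₀₀, c₁₀ ≥ 0` and `c₁₁ > 0`) and
`P_n(t) = C₁ t P'_{n-1}(t) + C₂ (n-2) t P_{n-2}(t)` for n ≥ 2.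
Then every `P_n` has only real zeros (every complex root is real). -/
theorem real_rooted_of_recurrence (C1 C2 : ℝ) (hC1 : 0 < C1) (hC2 : 0 < C2)
    (c00 c10 c11 : ℝ) (h00 : 0 ≤ c00) (h10 : 0 ≤ c10) (h11 : 0 < c11)
    (P : ℕ → Polynomial ℝ)
    (hP0 : P 0 = C c00)
    (hP1 : P 1 = C c11 * X + C c10)
    (hrec : ∀ n, 2 ≤ n →
      P n = C C1 * X * derivative (P (n - 1)) + C (C2 * ((n : ℝ) - 2)) * X * P (n - 2)) :
    ∀ n, ∀ z ∈ ((P n).map (algebraMap ℝ ℂ)).roots, z.im = 0 :=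
  real_rooted_of_recurrence_general C1 C2 hC1 hC2 c00 c10 c11 h10 h11 P hP0 hP1 hrec
end

section
/- The numbers u_{n,k} defined by u_{n,k} = (2k-1)·u_{n-1,k} + 2(n-2)·u_{n-2,k-1} for n ≥ 2 (with u_{0,0}=1, u_{1,1}=1, and u_{n,k}=0 otherwise for small n) give generating polynomials P_n(t) = ∑_k u_{n,k} t^k satisfying P_n(t) = 2t·P'_{n-1}(t) − P_{n-1}(t) + 2t(n-2)·P_{n-2}(t), and every P_n(t) is real-rooted. -/
/-!
Write `P_n = t Q_n`; then `Q_{n+2} = Q_{n+1} + 2t Q'_{n+1} + 2n t Q_n`. By induction, `Q_{n+2}`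
has positive leading coefficient and simple negative roots `r_0 < ⋯ < r_{d-1}`, at which
`Q_{n+1}` has the same sign as `Q'_{n+2}`, namely `(-1)^(d-1-i)`. At `r_i` the recurrence leaves
`Q_{n+3}(r_i) = r_i (2 Q'_{n+2}(r_i) + 2(n+1) Q_{n+1}(r_i))`, of sign `(-1)^(d-i)`, while
`Q_{n+3}(0) = Q_{n+2}(0) > 0`. The intermediate value theorem then yields a root of `Q_{n+3}` in
each interval `(r_i, r_{i+1})` and in `(r_{d-1}, 0)`, plus one below `r_0` when the degree goes
up; these are all its roots, and they interlace those of `Q_{n+2}` in the same way.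
-/

open Polynomial

/-- `u n k`: number of type B merging-free separated set partitions of ⟨n⟩ with k blocks,
satisfying `u_{n,k} = (2k-1) u_{n-1,k} + 2(n-2) u_{n-2,k-1}` for n ≥ 2, with
`u_{0,0} = 1`, `u_{1,1} = 1`, and `u_{n,k} = 0` otherwise for small n. -/
def u : ℕ → ℕ → ℕ
  | 0, 0 => 1
  | 0, _ + 1 => 0
  | 1, 1 => 1
  | 1, _ => 0
  | _ + 2, 0 => 0
  | n + 2, k + 1 => (2 * (k + 1) - 1) * u (n + 1) (k + 1) + 2 * n * u n k

/-- The generating polynomials `P_n(t) = ∑_k u_{n,k} t^k`. -/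
noncomputable def Pu (n : ℕ) : Polynomial ℝ :=
  ∑ k ∈ Finset.range (n + 1), C (u n k : ℝ) * X ^ k

open Finset Lagrange Filter Asymptotics

theorem neg_one_pow_card_mul_eval_nodal_pos {ι : Type*} (s : Finset ι) (v : ι → ℝ) {x : ℝ}
    (hx : ∀ i ∈ s, v i ≠ x) : 0 < (-1) ^ #{i ∈ s | x < v i} * (nodal s v).eval x := by
  rw [eval_nodal, ← prod_filter_mul_prod_filter_not s (fun i => x < v i), ← mul_assoc,
    ← prod_neg]
  refine mul_pos (prod_pos fun i hi => ?_) (prod_pos fun i hi => ?_)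
  · linarith [(mem_filter.1 hi).2]
  · obtain ⟨hi, hle⟩ := mem_filter.1 hi
    exact sub_pos.2 ((not_lt.1 hle).lt_of_ne (hx i hi))

theorem card_filter_apply_lt_of_strictMono {α : Type*} [LinearOrder α] {d : ℕ} {r : Fin d → α}
    (hr : StrictMono r)
    (i : Fin d) : #{j | r i < r j} = d - 1 - i := by
  simp_rw [hr.lt_iff_lt, filter_lt_eq_Ioi, Fin.card_Ioi]

theorem neg_one_pow_mul_eval_derivative_nodal_pos {d : ℕ} {r : Fin d → ℝ} (hr : StrictMono r)
    (i : Fin d) : 0 < (-1) ^ (d - 1 - i : ℕ) * (derivative (nodal univ r)).eval (r i) := by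
  have h := neg_one_pow_card_mul_eval_nodal_pos (univ.erase i) r
    (fun j hj => hr.injective.ne (ne_of_mem_erase hj))
  rwa [filter_erase, erase_eq_of_notMem (by simp), card_filter_apply_lt_of_strictMono hr,
    ← eval_nodal_derivative_eval_node_eq (mem_univ i)] at h

theorem exists_mem_Ioo_isRoot_of_eval_mul_neg {h : ℝ[X]} {a b : ℝ} (hab : a ≤ b)
    (hsign : h.eval a * h.eval b < 0) : ∃ x ∈ Set.Ioo a b, h.IsRoot x := by
  rcases mul_neg_iff.1 hsign with ⟨ha, hb⟩ | ⟨ha, hb⟩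
  · exact intermediate_value_Ioo' hab h.continuous.continuousOn ⟨hb, ha⟩
  · exact intermediate_value_Ioo hab h.continuous.continuousOn ⟨ha, hb⟩

theorem exists_eq_C_mul_nodal_of_eval_mul_neg {D : ℕ} {h : ℝ[X]} (hdeg : h.natDegree ≤ D)
    {p : Fin (D + 1) → ℝ} (hp : StrictMono p)
    (halt : ∀ i : Fin D, h.eval (p i.castSucc) * h.eval (p i.succ) < 0) :
    ∃ ρ : Fin D → ℝ, StrictMono ρ ∧ (∀ i, ρ i ∈ Set.Ioo (p i.castSucc) (p i.succ)) ∧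
      h = C h.leadingCoeff * nodal univ ρ := by
  choose ρ hρ hroot using fun i =>
    exists_mem_Ioo_isRoot_of_eval_mul_neg (hp Fin.castSucc_lt_succ).le (halt i)
  have hρ_mono : StrictMono ρ := fun i j hij =>
    calc ρ i < p i.succ := (hρ i).2
      _ ≤ p j.castSucc := hp.monotone (Fin.succ_le_castSucc_iff.2 hij)
      _ < ρ j := (hρ j).1
  refine ⟨ρ, hρ_mono, hρ, eq_leadingCoeff_mul_of_monic_of_dvd_of_natDegree_le nodal_monic ?_ ?_⟩
  · rw [nodal_eq]
    exact Fintype.prod_dvd_of_coprime (pairwise_coprime_X_sub_C hρ_mono.injective)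
      fun i => dvd_iff_isRoot.2 (hroot i)
  · simpa [natDegree_nodal] using hdeg

theorem eval_mul_eval_neg_of_neg_one_pow_mul_pos {D : ℕ} {φ : Fin (D + 1) → ℝ}
    (hφ : ∀ m : Fin (D + 1), 0 < (-1) ^ (D - m : ℕ) * φ m) (i : Fin D) :
    φ i.castSucc * φ i.succ < 0 := by
  have h₁ := hφ i.castSucc
  have h₂ := hφ i.succ
  rw [Fin.val_castSucc, show D - i = D - (i + 1) + 1 by omega, pow_succ] at h₁
  rw [Fin.val_succ] at h₂
  have hsq : ((-1 : ℝ) ^ (D - (i + 1))) ^ 2 = 1 := by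
    rw [← pow_mul, pow_mul', neg_one_sq, one_pow]
  nlinarith [mul_pos h₁ h₂]

theorem eventually_atBot_neg_one_pow_mul_eval_pos {h : ℝ[X]} (hlc : 0 < h.leadingCoeff) :
    ∀ᶠ x in atBot, 0 < (-1) ^ h.natDegree * h.eval x := by
  refine (IsEquivalent.refl.mul h.isEquivalent_atBot_lead).eventually_pos ?_
  filter_upwards [eventually_lt_atBot 0] with x hx
  have : (-1) ^ h.natDegree * (h.leadingCoeff * x ^ h.natDegree)
      = h.leadingCoeff * (-x) ^ h.natDegree := by rw [neg_pow]; ring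
  simp only [Pi.mul_apply, this]
  exact mul_pos hlc (pow_pos (neg_pos.2 hx) _)

theorem lt_apply_iff_of_mem_Ioo {α : Type*} [LinearOrder α] {D : ℕ} {p : Fin (D + 1) → α}
    (hp : StrictMono p) {k : Fin D} {x : α} (hx : x ∈ Set.Ioo (p k.castSucc) (p k.succ))
    (m : Fin (D + 1)) : x < p m ↔ p k.castSucc < p m := by
  refine ⟨hx.1.trans, fun h => hx.2.trans_le (hp.monotone ?_)⟩
  exact Fin.castSucc_lt_iff_succ_le.1 (hp.lt_iff_lt.1 h)

theorem natDegree_X_mul_derivative_le {R : Type*} [Semiring R] (p : R[X]) :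
    (X * derivative p).natDegree ≤ p.natDegree := by
  refine natDegree_le_iff_coeff_eq_zero.2 fun k hk => ?_
  cases k with
  | zero => simp
  | succ k =>
    rw [coeff_X_mul, coeff_derivative, coeff_eq_zero_of_natDegree_lt hk, zero_mul]

theorem eval_zero_nodal_pos {ι : Type*} (s : Finset ι) {v : ι → ℝ} (hv : ∀ i ∈ s, v i < 0) :
    0 < (nodal s v).eval 0 := by
  rw [eval_nodal]
  exact prod_pos fun i hi => by linarith [hv i hi]

theorem strictMono_snoc_of_lt {α : Type*} [Preorder α] {d : ℕ} {r : Fin d → α} {a : α}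
    (hr : StrictMono r) (hra : ∀ i, r i < a) : StrictMono (Fin.snoc r a : Fin (d + 1) → α) := by
  rw [← Fin.insertNth_last', Fin.strictMono_insertNth_iff]
  exact ⟨hr, fun i _ => hra i, fun i hi => absurd hi (by simp)⟩

theorem neg_one_pow_mul_eval_snoc_zero_pos {d : ℕ} {r : Fin d → ℝ} {h : ℝ[X]}
    (hh_root : ∀ i : Fin d, 0 < (-1) ^ (d - i : ℕ) * h.eval (r i)) (hh_zero : 0 < h.eval 0)
    (m : Fin (d + 1)) : 0 < (-1) ^ (d - m : ℕ) * h.eval (Fin.snoc (α := fun _ => ℝ) r 0 m) := by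
  induction m using Fin.lastCases with
  | last => simpa using hh_zero
  | cast i => simpa using hh_root i

-- Sign alternation of `g` at the roots of `f` encodes that the roots of `g` interlace those of `f`.
def NegInterlacing (g f : ℝ[X]) : Prop :=
  ∃ (d : ℕ) (r : Fin d → ℝ), StrictMono r ∧ (∀ i, r i < 0) ∧ 0 < f.leadingCoeff ∧
    f = C f.leadingCoeff * nodal univ r ∧ 0 < g.leadingCoeff ∧ g.natDegree ≤ d ∧
    ∀ i : Fin d, 0 < (-1) ^ (d - 1 - i : ℕ) * g.eval (r i)

namespace NegInterlacing

theorem splits {g f : ℝ[X]} (H : NegInterlacing g f) : f.Splits := by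
  obtain ⟨d, r, -, -, -, hf, -⟩ := H
  rw [hf, nodal_eq]
  exact (Splits.prod fun i _ => Splits.X_sub_C (r i)).C_mul _

theorem of_alternating {d D : ℕ} {f h : ℝ[X]} {r : Fin d → ℝ}
    (hf_pos : 0 < f.leadingCoeff) (hf : f = C f.leadingCoeff * nodal univ r) (hdD : d ≤ D)
    {p : Fin (D + 1) → ℝ} (hp : StrictMono p) (hp_last : p (Fin.last D) = 0)
    (hrp : ∀ j, ∃ m, r j = p m) (hcount : ∀ k : Fin D, #{j | p k.castSucc < r j} = D - 1 - k)
    (hdeg : h.natDegree ≤ D) (hsign : ∀ m : Fin (D + 1), 0 < (-1) ^ (D - m : ℕ) * h.eval (p m)) :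
    NegInterlacing f h := by
  obtain ⟨ρ, hρ, hρp, hh⟩ :=
    exists_eq_C_mul_nodal_of_eval_mul_neg hdeg hp (eval_mul_eval_neg_of_neg_one_pow_mul_pos hsign)
  have hρ_neg : ∀ k, ρ k < 0 := fun k =>
    (hρp k).2.trans_le (hp_last ▸ hp.monotone (Fin.le_last _))
  have hρr : ∀ k j, ρ k < r j ↔ p k.castSucc < r j := fun k j => by
    obtain ⟨m, hm⟩ := hrp j
    exact hm ▸ lt_apply_iff_of_mem_Ioo hp (hρp k) m
  have hrρ : ∀ k j, r j ≠ ρ k := fun k j hj => by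
    simpa [hj] using ((hρr k j).2 (hj ▸ (hρp k).1))
  have hh_pos : 0 < h.leadingCoeff := by
    have h₀ := hsign (Fin.last D)
    rw [hp_last, Fin.val_last, Nat.sub_self, pow_zero, one_mul, hh, eval_mul, eval_C] at h₀
    exact pos_of_mul_pos_left h₀ (eval_zero_nodal_pos univ fun k _ => hρ_neg k).le
  refine ⟨D, ρ, hρ, hρ_neg, hh_pos, hh, hf_pos, ?_, fun (k : Fin D) => ?_⟩
  · rw [hf, natDegree_C_mul hf_pos.ne', natDegree_nodal, card_univ, Fintype.card_fin]
    exact hdD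
  · have hsgn := neg_one_pow_card_mul_eval_nodal_pos univ r (fun j _ => hrρ k j)
    simp_rw [hρr, hcount] at hsgn
    rw [hf, eval_mul, eval_C, mul_left_comm]
    exact mul_pos hf_pos hsgn

variable {d : ℕ} {r : Fin d → ℝ} {f h : ℝ[X]}

theorem of_sign_eval_of_natDegree_le (hr : StrictMono r) (hr_neg : ∀ i, r i < 0)
    (hf_pos : 0 < f.leadingCoeff) (hf : f = C f.leadingCoeff * nodal univ r)
    (hh_root : ∀ i : Fin d, 0 < (-1) ^ (d - i : ℕ) * h.eval (r i)) (hh_zero : 0 < h.eval 0)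
    (hdeg : h.natDegree ≤ d) : NegInterlacing f h := by
  refine of_alternating hf_pos hf le_rfl (strictMono_snoc_of_lt hr hr_neg) (Fin.snoc_last _ _)
    (fun j => ⟨j.castSucc, by simp⟩) (fun k => ?_) hdeg
    (neg_one_pow_mul_eval_snoc_zero_pos hh_root hh_zero)
  rw [Fin.snoc_castSucc]
  exact card_filter_apply_lt_of_strictMono hr k

theorem of_sign_eval_of_natDegree_eq_succ (hr : StrictMono r) (hr_neg : ∀ i, r i < 0)
    (hf_pos : 0 < f.leadingCoeff) (hf : f = C f.leadingCoeff * nodal univ r)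
    (hh_root : ∀ i : Fin d, 0 < (-1) ^ (d - i : ℕ) * h.eval (r i)) (hh_zero : 0 < h.eval 0)
    (hdeg : h.natDegree = d + 1) (hh_pos : 0 < h.leadingCoeff) : NegInterlacing f h := by
  set p : Fin (d + 1) → ℝ := Fin.snoc r 0
  have hp := strictMono_snoc_of_lt hr hr_neg
  obtain ⟨x₀, hx₀_sign, hx₀_lt⟩ :=
    ((eventually_atBot_neg_one_pow_mul_eval_pos hh_pos).and (eventually_lt_atBot (p 0))).exists
  refine of_alternating (p := Fin.cons x₀ p) hf_pos hf d.le_succ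
    (Fin.strictMono_cons.2 ⟨fun j => hx₀_lt.trans_le (hp.monotone (Fin.zero_le j)), hp⟩)
    (Fin.snoc_last (α := fun _ => ℝ) _ _)
    (fun j => ⟨j.castSucc.succ, by simp [p]⟩) (fun k => ?_) hdeg.le (fun m => ?_)
  · induction k using Fin.cases with
    | zero =>
      have hx₀_r (j : Fin d) : x₀ < r j := by
        simpa [p] using hx₀_lt.trans_le (hp.monotone (Fin.zero_le j.castSucc))
      simp [hx₀_r]
    | succ i =>
      rw [← Fin.succ_castSucc, Fin.cons_succ, show p i.castSucc = r i from Fin.snoc_castSucc ..,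
        card_filter_apply_lt_of_strictMono hr i, Fin.val_succ]
      omega
  · induction m using Fin.cases with
    | zero => simpa [← hdeg] using hx₀_sign
    | succ m => simpa using neg_one_pow_mul_eval_snoc_zero_pos hh_root hh_zero m

theorem add_two_mul_X_mul_derivative_add {g : ℝ[X]} (H : NegInterlacing g f) {c : ℝ}
    (hc : 0 < c) :
    NegInterlacing f (f + 2 * X * derivative f + C c * X * g) := by
  obtain ⟨d, r, hr, hr_neg, hf_pos, hf, hg_pos, hg_deg, hg_sign⟩ := H
  have heval (x : ℝ) : eval x (f + 2 * X * derivative f + C c * X * g)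
      = f.eval x + 2 * x * (derivative f).eval x + c * x * g.eval x := by simp
  have hh_zero : 0 < eval 0 (f + 2 * X * derivative f + C c * X * g) := by
    rw [heval, hf]
    simpa using mul_pos hf_pos (eval_zero_nodal_pos univ fun i _ => hr_neg i)
  have hh_root (i : Fin d) :
      0 < (-1) ^ (d - i : ℕ) * eval (r i) (f + 2 * X * derivative f + C c * X * g) := by
    have hf_root : f.eval (r i) = 0 := by
      rw [hf, eval_mul, eval_nodal_at_node (mem_univ i), mul_zero]
    have hf' : 0 < (-1) ^ (d - 1 - i : ℕ) * (derivative f).eval (r i) := by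
      rw [hf, derivative_C_mul, eval_mul, eval_C, mul_left_comm]
      exact mul_pos hf_pos (neg_one_pow_mul_eval_derivative_nodal_pos hr i)
    have key := mul_pos (neg_pos.2 (hr_neg i))
      (add_pos (mul_pos two_pos hf') (mul_pos hc (hg_sign i)))
    rw [heval, hf_root, show d - i = d - 1 - i + 1 by omega, pow_succ]
    linarith
  have hf_deg : f.natDegree = d := by
    rw [hf, natDegree_C_mul hf_pos.ne', natDegree_nodal, card_univ, Fintype.card_fin]
  have hdeg₁ : (f + 2 * X * derivative f).natDegree ≤ d := by
    refine natDegree_add_le_of_degree_le hf_deg.le ?_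
    rw [mul_assoc]
    exact natDegree_mul_le.trans (by simpa [hf_deg] using natDegree_X_mul_derivative_le f)
  have hg_ne : g ≠ 0 := leadingCoeff_ne_zero.1 hg_pos.ne'
  have hdeg₂ : (C c * X * g).natDegree = g.natDegree + 1 := by
    rw [mul_assoc, natDegree_C_mul hc.ne', natDegree_X_mul hg_ne]
  rcases hg_deg.lt_or_eq with hlt | heq
  · exact of_sign_eval_of_natDegree_le hr hr_neg hf_pos hf hh_root hh_zero
      (natDegree_add_le_of_degree_le hdeg₁ (by omega))
  · have hlt : (f + 2 * X * derivative f).natDegree < (C c * X * g).natDegree := by omega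
    refine of_sign_eval_of_natDegree_eq_succ hr hr_neg hf_pos hf hh_root hh_zero
      (by rw [natDegree_add_eq_right_of_natDegree_lt hlt, hdeg₂, heq]) ?_
    rw [leadingCoeff_add_of_degree_lt (degree_lt_degree hlt)]
    simpa using mul_pos hc hg_pos

end NegInterlacing

theorem u_eq_zero_of_lt : ∀ {n k : ℕ}, n < k → u n k = 0
  | 0, _ + 1, _ => rfl
  | 1, _ + 2, _ => rfl
  | n + 2, k + 1, h => by
    rw [u, u_eq_zero_of_lt (by omega : n + 1 < k + 1), u_eq_zero_of_lt (by omega : n < k)]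
    simp

theorem u_succ_zero (n : ℕ) : u (n + 1) 0 = 0 := by
  cases n <;> rfl

theorem u_add_two_succ (n k : ℕ) :
    u (n + 2) (k + 1) = (2 * k + 1) * u (n + 1) (k + 1) + 2 * n * u n k := by
  rw [u, show 2 * (k + 1) - 1 = 2 * k + 1 by omega]

theorem coeff_Pu (n k : ℕ) : (Pu n).coeff k = u n k := by
  simp only [Pu, finsetSum_coeff, coeff_C_mul_X_pow, sum_ite_eq, mem_range]
  split_ifs with hk
  · rfl
  · rw [u_eq_zero_of_lt (by omega), Nat.cast_zero]

theorem Pu_add_two (n : ℕ) :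
    Pu (n + 2) = 2 * X * derivative (Pu (n + 1)) - Pu (n + 1) + C (2 * (n : ℝ)) * X * Pu n := by
  ext (_ | k)
  · simp [coeff_Pu, u_succ_zero]
  · simp only [coeff_add, coeff_sub, mul_assoc, coeff_ofNat_mul, coeff_C_mul, coeff_X_mul,
      coeff_derivative, coeff_Pu, u_add_two_succ]
    push_cast
    ring

theorem X_mul_divX_Pu {n : ℕ} (hn : n ≠ 0) : X * (Pu n).divX = Pu n := by
  obtain ⟨m, rfl⟩ := Nat.exists_eq_succ_of_ne_zero hn
  simpa [coeff_Pu, u_succ_zero] using X_mul_divX_add (Pu (m + 1))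

theorem divX_Pu_add_two {n : ℕ} (hn : n ≠ 0) :
    (Pu (n + 2)).divX = (Pu (n + 1)).divX + 2 * X * derivative (Pu (n + 1)).divX
      + C (2 * (n : ℝ)) * X * (Pu n).divX := by
  have h₁ := X_mul_divX_Pu (n := n + 1) (by omega)
  have h₀ := X_mul_divX_Pu hn
  set Q₁ := (Pu (n + 1)).divX
  set Q₀ := (Pu n).divX
  refine mul_left_cancel₀ X_ne_zero ?_
  rw [X_mul_divX_Pu (by omega), Pu_add_two, ← h₁, ← h₀, derivative_mul, derivative_X]
  ring

theorem Pu_zero : Pu 0 = 1 := by simp [Pu, u]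

theorem Pu_one : Pu 1 = X := by simp [Pu, sum_range_succ, u]

theorem Pu_two : Pu 2 = X := by simp [Pu, sum_range_succ, u]

theorem negInterlacing_divX_Pu (n : ℕ) : NegInterlacing (Pu (n + 1)).divX (Pu (n + 2)).divX := by
  induction n with
  | zero =>
    have hdivX : (X : ℝ[X]).divX = 1 := by simpa using divX_X_pow (R := ℝ) (n := 1)
    rw [Pu_one, Pu_two, hdivX]
    exact ⟨0, finZeroElim, fun i => i.elim0, finZeroElim, by simp, by simp, by simp, by simp,
      finZeroElim⟩
  | succ n ih =>
    rw [divX_Pu_add_two n.succ_ne_zero]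
    exact ih.add_two_mul_X_mul_derivative_add (by positivity)

theorem splits_Pu : ∀ n, (Pu n).Splits
  | 0 => Pu_zero ▸ Splits.one
  | 1 => Pu_one ▸ Splits.X
  | n + 2 => X_mul_divX_Pu (n + 1).succ_ne_zero ▸ Splits.X.mul (negInterlacing_divX_Pu n).splits

/-- The polynomials `P_n` satisfy
`P_n(t) = 2t P'_{n-1}(t) − P_{n-1}(t) + 2t(n-2) P_{n-2}(t)` for n ≥ 2,
and every `P_n` is real-rooted (all complex roots are real). -/
theorem Pu_recurrence_and_real_rooted :
    (∀ n, 2 ≤ n →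
      Pu n = 2 * X * derivative (Pu (n - 1)) - Pu (n - 1)
        + C (2 * ((n : ℝ) - 2)) * X * Pu (n - 2)) ∧
    (∀ n, ∀ z ∈ ((Pu n).map (algebraMap ℝ ℂ)).roots, z.im = 0) := by
  refine ⟨fun n hn => ?_, fun n z hz => ?_⟩
  · obtain ⟨m, rfl⟩ := Nat.exists_eq_add_of_le' hn
    simpa using Pu_add_two m
  · rw [(splits_Pu n).roots_map] at hz
    obtain ⟨x, -, rfl⟩ := Multiset.mem_map.1 hz
    exact Complex.ofReal_im x
end

section
/- For n ≥ 4 even, the quantity 2(n-2)·u_{n-2,(n-2)/2} − u_{n-1,n/2} is strictly positive; in fact it equals 2(n-3)²·u_{n-3,(n-2)/2} + 4(n-2)(n-4)·u_{n-4,(n-4)/2}. -/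
theorem u_zero : ∀ n k : ℕ, n + 1 < 2 * k → u n k = 0 := by
  intro n
  induction n using Nat.strong_induction_on with
  | _ n ih =>
    match n, ih with
    | 0, _ =>
      rintro (_ | k) h
      · omega
      · rfl
    | 1, _ =>
      rintro (_ | _ | k) h
      · omega
      · omega
      · rfl
    | (n + 2), ih =>
      rintro (_ | k) h
      · omega
      · show (2 * (k + 1) - 1) * u (n + 1) (k + 1) + 2 * n * u n k = 0
        rw [ih (n + 1) (by omega) (k + 1) (by omega), ih n (by omega) k (by omega)]
        ring

theorem u_diag_pos : ∀ j : ℕ, 0 < u (2 * j + 1) (j + 1) := by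
  intro j
  induction j with
  | zero => decide
  | succ j ih =>
    have : u (2 * (j + 1) + 1) (j + 1 + 1)
        = (2 * (j + 1 + 1) - 1) * u (2 * j + 1 + 1) (j + 1 + 1)
          + 2 * (2 * j + 1) * u (2 * j + 1) (j + 1) := by
      show u (2 * j + 1 + 2) (j + 1 + 1) = _
      rw [u]
    rw [this]
    have h1 : 0 < 2 * (2 * j + 1) * u (2 * j + 1) (j + 1) := by positivity
    omega

/-- For n ≥ 4 even, `2(n-2) u_{n-2,(n-2)/2} − u_{n-1,n/2}` equals
`2(n-3)² u_{n-3,(n-2)/2} + 4(n-2)(n-4) u_{n-4,(n-4)/2}` and is strictly positive. -/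
theorem leading_coefficient_positive (n : ℕ) (h4 : 4 ≤ n) (he : Even n) :
    ((2 * (n - 2) * u (n - 2) ((n - 2) / 2) : ℕ) : ℤ) - (u (n - 1) (n / 2) : ℤ)
        = 2 * ((n : ℤ) - 3) ^ 2 * (u (n - 3) ((n - 2) / 2) : ℤ)
          + 4 * ((n : ℤ) - 2) * ((n : ℤ) - 4) * (u (n - 4) ((n - 4) / 2) : ℤ) ∧
    0 < ((2 * (n - 2) * u (n - 2) ((n - 2) / 2) : ℕ) : ℤ) - (u (n - 1) (n / 2) : ℤ) := by
  obtain ⟨m, rfl⟩ : ∃ m, n = 2 * m + 4 := by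
    obtain ⟨r, hr⟩ := he; exact ⟨r - 2, by omega⟩
  have e1 : 2 * m + 4 - 2 = 2 * m + 2 := by omega
  have e2 : 2 * m + 4 - 1 = 2 * m + 3 := by omega
  have e3 : 2 * m + 4 - 3 = 2 * m + 1 := by omega
  have e4 : 2 * m + 4 - 4 = 2 * m := by omega
  have d1 : (2 * m + 2) / 2 = m + 1 := by omega
  have d2 : (2 * m + 4) / 2 = m + 2 := by omega
  have d3 : (2 * m) / 2 = m := by omega
  rw [e1, e2, e3, e4, d1, d2, d3]
  have h1 : u (2 * m + 3) (m + 2)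
      = (2 * (m + 2) - 1) * u (2 * m + 2) (m + 2) + 2 * (2 * m + 1) * u (2 * m + 1) (m + 1) := by
    show u (2 * m + 1 + 2) (m + 1 + 1) = _
    rw [u]
  have hz : u (2 * m + 2) (m + 2) = 0 := u_zero _ _ (by omega)
  have h2 : u (2 * m + 2) (m + 1)
      = (2 * (m + 1) - 1) * u (2 * m + 1) (m + 1) + 2 * (2 * m) * u (2 * m) m := by
    show u (2 * m + 2) (m + 1) = _
    rw [u]
  have hpos := u_diag_pos m
  simp only [show 2 * (m + 2) - 1 = 2 * m + 3 by omega, show 2 * (m + 1) - 1 = 2 * m + 1 by omega]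
    at h1 h2
  constructor
  · rw [h1, hz, h2]
    push_cast
    ring
  · rw [h1, hz, h2]
    push_cast
    have : (0:ℤ) < (u (2 * m + 1) (m + 1) : ℤ) := by exact_mod_cast hpos
    nlinarith [this, Nat.cast_nonneg (α := ℤ) (u (2 * m) m), (show (0:ℤ) ≤ m from Nat.cast_nonneg m)]
end

section
/- The map σ ↦ σ', where σ' is obtained from a flattened signed permutation σ by changing the signs of all entries that are not the bottom of a modular run of σ, is a descent-complementing involution on R_n^B: σ has a descent at position i if and only if σ' has an ascent at position i. Consequently d_{n,k} = d_{n,n-k-1}, i.e., the distribution of descents over R_n^B is symmetric. -/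
/-- `w` is a signed permutation of length n: a list of nonzero integers whose
absolute values form a permutation of {1,...,n}. -/
def IsSignedPerm (n : ℕ) (w : List ℤ) : Prop :=
  w.length = n ∧ (w.map Int.natAbs).Perm (List.range' 1 n)

/-- Position `i` is the bottom of a modular run (mrun) of `w`: either `i = 0`
or the previous entry is larger in absolute value. -/
def IsBottom (w : List ℤ) (i : ℕ) : Prop :=
  i = 0 ∨ (w.getD i 0).natAbs < (w.getD (i - 1) 0).natAbs

instance (w : List ℤ) (i : ℕ) : Decidable (IsBottom w i) := by
  unfold IsBottom; infer_instance

/-- `w ∈ R_n^B`: `w` is a signed permutation of length n which is the flattening of a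
type B merging-free partition without zero block; equivalently the bottoms of its
mruns are positive and increasing, and the absolute value of the top of each mrun
exceeds the bottom of the following mrun. -/
def MemR (n : ℕ) (w : List ℤ) : Prop :=
  IsSignedPerm n w ∧
  (∀ i, i < n → IsBottom w i → 0 < w.getD i 0) ∧
  (∀ i j, i < j → j < n → IsBottom w i → IsBottom w j → w.getD i 0 < w.getD j 0) ∧
  (∀ j, 0 < j → j < n → IsBottom w j → w.getD j 0 < ((w.getD (j - 1) 0).natAbs : ℤ))

/-- The number of descents of `w`: positions i with `w_i > w_{i+1}`. -/
def des (w : List ℤ) : ℕ :=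
  ((List.range (w.length - 1)).filter
    (fun i => decide (w.getD (i + 1) 0 < w.getD i 0))).length

/-- The major index of `w`: sum of the (1-based) descent positions. -/
def maj (w : List ℤ) : ℕ :=
  ∑ i ∈ Finset.range (w.length - 1),
    if w.getD (i + 1) 0 < w.getD i 0 then i + 1 else 0

/-- The number of modular runs (mruns) of `w`. -/
def numRuns (w : List ℤ) : ℕ :=
  ((List.range w.length).filter (fun i => decide (IsBottom w i))).length

/-- `d n k`: the number of permutations in `R_n^B` having `k` descents. -/
noncomputable def dcount (n k : ℕ) : ℕ :=
  Nat.card {w : List ℤ // MemR n w ∧ des w = k}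

/-- `τ` lies in the valley-hopping orbit of `σ`: same absolute values everywhere,
and the same (positive) entries at the bottoms of the mruns of `σ`. -/
def InOrb (σ τ : List ℤ) : Prop :=
  τ.length = σ.length ∧ ∀ i, i < σ.length →
    (τ.getD i 0).natAbs = (σ.getD i 0).natAbs ∧
    (IsBottom σ i → τ.getD i 0 = σ.getD i 0)

/-- The map flipping the signs of all entries of `w` that are not bottoms of mruns. -/
def flipNonBottoms (w : List ℤ) : List ℤ :=
  w.mapIdx (fun i x => if IsBottom w i then x else -x)


/-!
Flipping the non-bottom entries keeps every absolute value, hence the bottoms and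
the conditions defining `R_n^B`; applying it twice changes nothing. For the descent
complement look at two adjacent entries `a = σ_i`, `b = σ_{i+1}`. If `i + 1` is not a
bottom then `|a| < |b|`, so whether `b < a` is decided by the sign of `b`, which is
flipped. If `i + 1` is a bottom then `0 < b < |a|` and `i` is not a bottom, so whether
`b < a` is decided by the sign of `a`, which is flipped. Thus descents and ascents are
exchanged, `des σ' = n - 1 - des σ`, and the involution matches the two classes
counted by `d_{n,k}` and `d_{n,n-k-1}`.
-/

open Finset

section Flip

variable (w : List ℤ)

@[simp]
theorem length_flipNonBottoms : (flipNonBottoms w).length = w.length := by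
  simp [flipNonBottoms]

-- Out of range both sides are `0 = -0`, so no bound on `i` is needed.
theorem getD_flipNonBottoms (i : ℕ) :
    (flipNonBottoms w).getD i 0 = if IsBottom w i then w.getD i 0 else -w.getD i 0 := by
  simp only [flipNonBottoms, List.getD_eq_getElem?_getD, List.getElem?_mapIdx]
  cases w[i]? <;> simp

@[simp]
theorem natAbs_getD_flipNonBottoms (i : ℕ) :
    ((flipNonBottoms w).getD i 0).natAbs = (w.getD i 0).natAbs := by
  rw [getD_flipNonBottoms]
  split_ifs <;> simp

@[simp]
theorem isBottom_flipNonBottoms (i : ℕ) : IsBottom (flipNonBottoms w) i ↔ IsBottom w i := by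
  simp only [IsBottom, natAbs_getD_flipNonBottoms]

theorem getD_flipNonBottoms_of_isBottom {i : ℕ} (hb : IsBottom w i) :
    (flipNonBottoms w).getD i 0 = w.getD i 0 := by
  rw [getD_flipNonBottoms, if_pos hb]

theorem map_natAbs_flipNonBottoms : (flipNonBottoms w).map Int.natAbs = w.map Int.natAbs := by
  refine List.ext_getElem (by simp) fun i hi₁ hi₂ => ?_
  rw [List.getElem_map, List.getElem_map, ← List.getD_eq_getElem _ 0 (by simpa using hi₁),
    ← List.getD_eq_getElem _ 0 (by simpa using hi₂), natAbs_getD_flipNonBottoms]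

theorem flipNonBottoms_flipNonBottoms : flipNonBottoms (flipNonBottoms w) = w := by
  refine List.ext_getElem (by simp) fun i hi₁ hi₂ => ?_
  rw [← List.getD_eq_getElem _ 0 hi₁, ← List.getD_eq_getElem _ 0 hi₂]
  simp only [getD_flipNonBottoms, isBottom_flipNonBottoms]
  split_ifs <;> simp

end Flip

theorem isBottom_succ_iff (w : List ℤ) (i : ℕ) :
    IsBottom w (i + 1) ↔ (w.getD (i + 1) 0).natAbs < (w.getD i 0).natAbs := by
  simp [IsBottom]

theorem IsSignedPerm.natAbs_getD_injOn {n : ℕ} {w : List ℤ} (hw : IsSignedPerm n w) {i j : ℕ}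
    (hi : i < n) (hj : j < n) (h : (w.getD i 0).natAbs = (w.getD j 0).natAbs) : i = j := by
  obtain ⟨rfl, hperm⟩ := hw
  have hnodup : (w.map Int.natAbs).Nodup := hperm.nodup_iff.2 List.nodup_range'
  rw [List.getD_eq_getElem _ _ hi, List.getD_eq_getElem _ _ hj] at h
  exact (hnodup.getElem_inj_iff (i := i) (j := j) (hi := by simpa) (hj := by simpa)).1
    (by simpa using h)

section MemR

variable {n : ℕ} {w : List ℤ}

theorem memR_flipNonBottoms (hw : MemR n w) : MemR n (flipNonBottoms w) := by
  obtain ⟨⟨hlen, hperm⟩, hpos, hincr, htop⟩ := hw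
  refine ⟨⟨by simpa using hlen, map_natAbs_flipNonBottoms w ▸ hperm⟩, ?_, ?_, ?_⟩
  · intro i hi hb
    rw [isBottom_flipNonBottoms] at hb
    rw [getD_flipNonBottoms_of_isBottom w hb]
    exact hpos i hi hb
  · intro i j hij hj hbi hbj
    rw [isBottom_flipNonBottoms] at hbi hbj
    rw [getD_flipNonBottoms_of_isBottom w hbi, getD_flipNonBottoms_of_isBottom w hbj]
    exact hincr i j hij hj hbi hbj
  · intro j hj0 hj hbj
    rw [isBottom_flipNonBottoms] at hbj
    rw [getD_flipNonBottoms_of_isBottom w hbj, natAbs_getD_flipNonBottoms]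
    exact htop j hj0 hj hbj

theorem MemR.getD_succ_lt_natAbs (hw : MemR n w) {i : ℕ} (hi : i + 1 < n)
    (hb : IsBottom w (i + 1)) : w.getD (i + 1) 0 < (w.getD i 0).natAbs := by
  simpa using hw.2.2.2 (i + 1) i.succ_pos hi hb

-- Bottoms increase, yet the bottom `σ_{i+1}` lies below `|σ_i|`.
theorem MemR.not_isBottom_of_isBottom_succ (hw : MemR n w) {i : ℕ} (hi : i + 1 < n)
    (hb : IsBottom w (i + 1)) : ¬ IsBottom w i := by
  intro hbi
  have h₁ := hw.2.1 i (by omega) hbi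
  have h₂ := hw.2.2.1 i (i + 1) i.lt_succ_self hi hbi hb
  have h₃ := hw.getD_succ_lt_natAbs hi hb
  omega

theorem MemR.descent_iff_not_descent_flipNonBottoms (hw : MemR n w) {i : ℕ} (hi : i + 1 < n) :
    w.getD (i + 1) 0 < w.getD i 0 ↔
      ¬ (flipNonBottoms w).getD (i + 1) 0 < (flipNonBottoms w).getD i 0 := by
  rw [getD_flipNonBottoms, getD_flipNonBottoms]
  by_cases hb : IsBottom w (i + 1)
  · have hpos := hw.2.1 (i + 1) hi hb
    have htop := hw.getD_succ_lt_natAbs hi hb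
    rw [if_pos hb, if_neg (hw.not_isBottom_of_isBottom_succ hi hb)]
    omega
  · have hlt : (w.getD i 0).natAbs < (w.getD (i + 1) 0).natAbs :=
      lt_of_le_of_ne (not_lt.1 (hb ∘ (isBottom_succ_iff w i).2))
        fun h => by simpa using hw.1.natAbs_getD_injOn (by omega) hi h
    rw [if_neg hb]
    split_ifs <;> omega

theorem des_eq_card_filter (w : List ℤ) :
    des w = #{i ∈ range (w.length - 1) | w.getD (i + 1) 0 < w.getD i 0} :=
  rfl

theorem MemR.des_flipNonBottoms (hw : MemR n w) : des (flipNonBottoms w) = n - 1 - des w := by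
  have hcompl : {i ∈ range (n - 1) |
        (flipNonBottoms w).getD (i + 1) 0 < (flipNonBottoms w).getD i 0} =
      {i ∈ range (n - 1) | ¬ w.getD (i + 1) 0 < w.getD i 0} :=
    filter_congr fun i hi =>
      iff_not_comm.1 (hw.descent_iff_not_descent_flipNonBottoms (by simp at hi; omega))
  have hsplit := card_filter_add_card_filter_not (s := range (n - 1))
    (p := fun i => w.getD (i + 1) 0 < w.getD i 0)
  rw [des_eq_card_filter, des_eq_card_filter, length_flipNonBottoms, hw.1.1, hcompl]
  rw [card_range] at hsplit
  omega

end MemR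

theorem memR_and_des_flipNonBottoms_iff {n k : ℕ} (hk : k ≤ n - 1) (w : List ℤ) :
    MemR n w ∧ des w = k ↔ MemR n (flipNonBottoms w) ∧ des (flipNonBottoms w) = n - 1 - k := by
  constructor
  · rintro ⟨hw, rfl⟩
    exact ⟨memR_flipNonBottoms hw, hw.des_flipNonBottoms⟩
  · rintro ⟨hw, hdes⟩
    have h := hw.des_flipNonBottoms
    rw [flipNonBottoms_flipNonBottoms] at h
    exact ⟨flipNonBottoms_flipNonBottoms w ▸ memR_flipNonBottoms hw, by omega⟩

theorem flip_involution_descent_complement_general (n : ℕ) :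
    (∀ w, MemR n w →
      MemR n (flipNonBottoms w) ∧
      flipNonBottoms (flipNonBottoms w) = w ∧
      (∀ i, i + 1 < n →
        (w.getD (i + 1) 0 < w.getD i 0 ↔
          ¬ ((flipNonBottoms w).getD (i + 1) 0 < (flipNonBottoms w).getD i 0)))) ∧
    (∀ k, k ≤ n - 1 → dcount n k = dcount n (n - 1 - k)) :=
  ⟨fun w hw => ⟨memR_flipNonBottoms hw, flipNonBottoms_flipNonBottoms w,
      fun _ hi => hw.descent_iff_not_descent_flipNonBottoms hi⟩,
    fun _ hk => Nat.card_congr <| Equiv.subtypeEquiv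
      (Function.Involutive.toPerm _ flipNonBottoms_flipNonBottoms)
      (memR_and_des_flipNonBottoms_iff hk)⟩

/-- Changing the signs of all non-bottom entries is a descent-complementing involution
on `R_n^B`: `σ` has a descent at position i iff `σ'` has an ascent at i. Consequently
the distribution of descents over `R_n^B` is symmetric: `d_{n,k} = d_{n,n-k-1}`. -/
theorem flip_involution_descent_complement (n : ℕ) (hn : 1 ≤ n) :
    (∀ w, MemR n w →
      MemR n (flipNonBottoms w) ∧
      flipNonBottoms (flipNonBottoms w) = w ∧
      (∀ i, i + 1 < n →
        (w.getD (i + 1) 0 < w.getD i 0 ↔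
          ¬ ((flipNonBottoms w).getD (i + 1) 0 < (flipNonBottoms w).getD i 0)))) ∧
    (∀ k, k ≤ n - 1 → dcount n k = dcount n (n - 1 - k)) :=
  flip_involution_descent_complement_general n
end

section
/- For the generating function G_n(q,t) = ∑_{σ∈R_n^B} q^{des(σ)} t^{maj(σ)}, one has G_n(q,t) = q^{n-1} t^{C(n,2)} G_n(q^{-1}, t^{-1}). -/
/-- The joint descent–major index generating function
`G_n(q,t) = ∑_{σ ∈ R_n^B} q^{des σ} t^{maj σ}`. -/
noncomputable def G (n : ℕ) (q t : ℝ) : ℝ :=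
  ∑ k ∈ Finset.range n, ∑ m ∈ Finset.range (Nat.choose n 2 + 1),
    (Nat.card {w : List ℤ // MemR n w ∧ des w = k ∧ maj w = m} : ℝ) * q ^ k * t ^ m

/-!
Negating every entry of `σ ∈ R_n^B` that is not the bottom of its mrun is an involution of `R_n^B`:
mruns are read off absolute values, and the bottoms keep their (positive) values. It turns every
descent into an ascent and vice versa. At a position `i + 1` that is not a bottom,
`|σ_{i+1}| > |σ_i|`, so the comparison of `σ_i` with `σ_{i+1}` is decided by the sign of `σ_{i+1}`,
which is flipped. At a bottom `i + 1 > 0`, `0 < σ_{i+1} < |σ_i|` and `i` is not a bottom, so the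
comparison is decided by the sign of `σ_i`, which is flipped. Hence the involution maps
`(des, maj)` to `(n - 1 - des, C(n,2) - maj)`.
-/

open Finset

theorem Finset.sum_range_sum_range_mul_pow_eq_pow_mul_sum_inv {K : Type*} [Field K] {N M : ℕ}
    {c : ℕ → ℕ → K} (hc : ∀ k < N, ∀ m < M, c (N - 1 - k) (M - 1 - m) = c k m)
    {q t : K} (hq : q ≠ 0) (ht : t ≠ 0) :
    ∑ k ∈ range N, ∑ m ∈ range M, c k m * q ^ k * t ^ m =
      q ^ (N - 1) * t ^ (M - 1) * ∑ k ∈ range N, ∑ m ∈ range M, c k m * q⁻¹ ^ k * t⁻¹ ^ m := by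
  calc ∑ k ∈ range N, ∑ m ∈ range M, c k m * q ^ k * t ^ m
      = ∑ k ∈ range N, ∑ m ∈ range M,
          c (N - 1 - k) (M - 1 - m) * q ^ (N - 1 - k) * t ^ (M - 1 - m) := by
        rw [← sum_range_reflect]
        exact sum_congr rfl fun k _ => (sum_range_reflect _ M).symm
    _ = ∑ k ∈ range N, ∑ m ∈ range M, c k m * q ^ (N - 1 - k) * t ^ (M - 1 - m) := by
        refine sum_congr rfl fun k hk => sum_congr rfl fun m hm => ?_
        rw [hc k (mem_range.mp hk) m (mem_range.mp hm)]
    _ = _ := by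
        rw [mul_sum]
        refine sum_congr rfl fun k hk => ?_
        rw [mul_sum]
        refine sum_congr rfl fun m hm => ?_
        rw [mem_range] at hk hm
        rw [pow_sub₀ q hq (show k ≤ N - 1 by omega), pow_sub₀ t ht (show m ≤ M - 1 by omega)]
        ring

theorem Finset.sum_range_pred_succ_eq_choose_two (n : ℕ) : ∑ i ∈ range (n - 1), (i + 1) = n.choose 2 := by
  rw [Nat.choose_two_right, ← sum_range_id]
  cases n with
  | zero => rfl
  | succ n => rw [sum_range_succ', Nat.add_sub_cancel, add_zero]

theorem des_eq_sum (w : List ℤ) :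
    des w = ∑ i ∈ range (w.length - 1), if w.getD (i + 1) 0 < w.getD i 0 then 1 else 0 := by
  rw [des, ← card_filter]
  rfl

namespace IsSignedPerm

variable {n : ℕ} {w : List ℤ}

theorem natAbs_getD_ne (hw : IsSignedPerm n w) {i j : ℕ} (hi : i < n) (hj : j < n)
    (hij : i ≠ j) : (w.getD i 0).natAbs ≠ (w.getD j 0).natAbs := by
  have hnodup : (w.map Int.natAbs).Nodup := hw.2.nodup_iff.mpr List.nodup_range'
  have hi' : i < (w.map Int.natAbs).length := by simpa [hw.1]
  have hj' : j < (w.map Int.natAbs).length := by simpa [hw.1]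
  intro h
  apply hij
  apply (hnodup.getElem_inj_iff (hi := hi') (hj := hj')).mp
  rw [List.getD_eq_getElem _ _ (hw.1 ▸ hi), List.getD_eq_getElem _ _ (hw.1 ▸ hj)] at h
  simpa using h

end IsSignedPerm

def negNonBottoms (w : List ℤ) : List ℤ :=
  (List.range w.length).map fun i => if IsBottom w i then w.getD i 0 else -(w.getD i 0)

@[simp]
theorem length_negNonBottoms (w : List ℤ) : (negNonBottoms w).length = w.length := by
  simp [negNonBottoms]

theorem getD_negNonBottoms (w : List ℤ) {i : ℕ} (h : i < w.length) :
    (negNonBottoms w).getD i 0 = if IsBottom w i then w.getD i 0 else -(w.getD i 0) := by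
  rw [List.getD_eq_getElem _ _ (by simpa using h)]
  simp [negNonBottoms]

@[simp]
theorem natAbs_getD_negNonBottoms (w : List ℤ) (i : ℕ) :
    ((negNonBottoms w).getD i 0).natAbs = (w.getD i 0).natAbs := by
  rcases lt_or_ge i w.length with h | h
  · rw [getD_negNonBottoms w h]
    split <;> simp
  · rw [List.getD_eq_default _ _ (by simpa using h), List.getD_eq_default _ _ h]

theorem isBottom_negNonBottoms_iff (w : List ℤ) (i : ℕ) :
    IsBottom (negNonBottoms w) i ↔ IsBottom w i := by
  simp only [IsBottom, natAbs_getD_negNonBottoms]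

theorem negNonBottoms_involutive : Function.Involutive negNonBottoms := by
  intro w
  refine List.ext_getElem (by simp) fun i h _ => ?_
  have hi : i < w.length := by simpa using h
  rw [← List.getD_eq_getElem _ 0 h, ← List.getD_eq_getElem _ 0 hi,
    getD_negNonBottoms _ (by simpa using hi), getD_negNonBottoms _ hi]
  by_cases hb : IsBottom w i <;> simp [hb, isBottom_negNonBottoms_iff]

theorem map_natAbs_negNonBottoms (w : List ℤ) :
    (negNonBottoms w).map Int.natAbs = w.map Int.natAbs := by
  refine List.ext_getElem (by simp) fun i h _ => ?_
  have hi : i < w.length := by simpa using h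
  simp only [List.getElem_map]
  rw [← List.getD_eq_getElem _ 0 (by simpa using hi), ← List.getD_eq_getElem _ 0 hi]
  exact natAbs_getD_negNonBottoms w i

theorem memR_negNonBottoms {n : ℕ} {w : List ℤ} (hw : MemR n w) : MemR n (negNonBottoms w) := by
  obtain ⟨⟨hlen, hperm⟩, hpos, hmono, htop⟩ := hw
  have hget : ∀ {i}, i < n → IsBottom w i → (negNonBottoms w).getD i 0 = w.getD i 0 :=
    fun hi hb => by rw [getD_negNonBottoms w (hlen ▸ hi), if_pos hb]
  simp only [MemR, IsSignedPerm, isBottom_negNonBottoms_iff, natAbs_getD_negNonBottoms,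
    length_negNonBottoms, map_natAbs_negNonBottoms]
  refine ⟨⟨hlen, hperm⟩, fun i hi hb => ?_, fun i j hij hj hbi hbj => ?_, fun j hj0 hj hb => ?_⟩
  · exact hget hi hb ▸ hpos i hi hb
  · rw [hget (hij.trans hj) hbi, hget hj hbj]
    exact hmono i j hij hj hbi hbj
  · exact hget hj hb ▸ htop j hj0 hj hb

namespace MemR

variable {n : ℕ} {w : List ℤ}

theorem descent_negNonBottoms_iff (hw : MemR n w) {i : ℕ} (hi : i + 1 < n) :
    (negNonBottoms w).getD (i + 1) 0 < (negNonBottoms w).getD i 0 ↔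
      ¬ w.getD (i + 1) 0 < w.getD i 0 := by
  have hlen : w.length = n := hw.1.1
  have hne := hw.1.natAbs_getD_ne (i := i) (j := i + 1) (by omega) hi (by omega)
  have hbottom : IsBottom w (i + 1) ↔ (w.getD (i + 1) 0).natAbs < (w.getD i 0).natAbs := by
    simp [IsBottom]
  rw [getD_negNonBottoms w (by omega), getD_negNonBottoms w (by omega)]
  by_cases hb1 : IsBottom w (i + 1)
  · have hlt := hbottom.mp hb1
    have hpos := hw.2.1 _ hi hb1
    have hb0 : ¬ IsBottom w i := fun hb0 => by
      have := hw.2.1 i (by omega) hb0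
      have := hw.2.2.1 i (i + 1) (by omega) hi hb0 hb1
      omega
    rw [if_pos hb1, if_neg hb0]
    omega
  · have hlt : (w.getD i 0).natAbs < (w.getD (i + 1) 0).natAbs := by
      have := mt hbottom.mpr hb1
      omega
    rw [if_neg hb1]
    split_ifs <;> omega

theorem sum_descent_negNonBottoms_add {M : Type*} [AddCommMonoid M] (hw : MemR n w)
    (f : ℕ → M) :
    (∑ i ∈ range (n - 1),
        if (negNonBottoms w).getD (i + 1) 0 < (negNonBottoms w).getD i 0 then f i else 0) +
      (∑ i ∈ range (n - 1), if w.getD (i + 1) 0 < w.getD i 0 then f i else 0) =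
      ∑ i ∈ range (n - 1), f i := by
  rw [← sum_add_distrib]
  refine sum_congr rfl fun i hi => ?_
  simp only [hw.descent_negNonBottoms_iff (show i + 1 < n by simp at hi; omega)]
  split_ifs <;> simp

theorem des_negNonBottoms_add (hw : MemR n w) : des (negNonBottoms w) + des w = n - 1 := by
  rw [des_eq_sum, des_eq_sum, length_negNonBottoms, hw.1.1,
    hw.sum_descent_negNonBottoms_add, sum_const, card_range, smul_eq_mul, mul_one]

theorem maj_negNonBottoms_add (hw : MemR n w) : maj (negNonBottoms w) + maj w = n.choose 2 := by
  rw [maj, maj, length_negNonBottoms, hw.1.1, hw.sum_descent_negNonBottoms_add,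
    sum_range_pred_succ_eq_choose_two]

end MemR

def negNonBottomsEquiv {n k m : ℕ} (hk : k < n) (hm : m ≤ n.choose 2) :
    {w : List ℤ // MemR n w ∧ des w = k ∧ maj w = m} ≃
      {w : List ℤ // MemR n w ∧ des w = n - 1 - k ∧ maj w = n.choose 2 - m} :=
  (negNonBottoms_involutive.toPerm _).subtypeEquiv fun w => by
    simp only [Function.Involutive.coe_toPerm]
    refine ⟨fun ⟨hw, hd, hmaj⟩ => ?_, fun ⟨hw, hd, hmaj⟩ => ?_⟩
    · have := hw.des_negNonBottoms_add
      have := hw.maj_negNonBottoms_add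
      exact ⟨memR_negNonBottoms hw, by omega, by omega⟩
    · have hw' : MemR n w := negNonBottoms_involutive w ▸ memR_negNonBottoms hw
      have := hw'.des_negNonBottoms_add
      have := hw'.maj_negNonBottoms_add
      exact ⟨hw', by omega, by omega⟩

theorem G_symmetry_general (n : ℕ) (q t : ℝ) (hq : q ≠ 0) (ht : t ≠ 0) :
    G n q t = q ^ (n - 1) * t ^ (Nat.choose n 2) * G n q⁻¹ t⁻¹ := by
  unfold G
  rw [sum_range_sum_range_mul_pow_eq_pow_mul_sum_inv ?_ hq ht, Nat.add_sub_cancel]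
  intro k hk m hm
  rw [Nat.add_sub_cancel]
  exact congrArg Nat.cast (Nat.card_congr (negNonBottomsEquiv hk (by omega))).symm

/-- `G_n(q,t) = q^{n-1} t^{C(n,2)} G_n(q⁻¹, t⁻¹)`. -/
theorem G_symmetry (n : ℕ) (hn : 1 ≤ n) (q t : ℝ) (hq : q ≠ 0) (ht : t ≠ 0) :
    G n q t = q ^ (n - 1) * t ^ (Nat.choose n 2) * G n q⁻¹ t⁻¹ :=
  G_symmetry_general n q t hq ht
end

section
/- For any σ in R_n^B with k modular runs, the orbit of σ under valley-hopping has descent generating polynomial ∑_{τ∈Orb(σ)} x^{des(τ)} = (2x)^{k-1} (1+x)^{n-2k+1}. -/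
/-! An element of the orbit of `σ` is determined by the set `S` of non-bottom
positions it negates, and its descents are the run ends outside `S` together with the positions
just before an element of `S`. Hence `x ^ des` factors over the non-bottom positions: a run end
contributes `x + x` (it gives a descent whether negated or not) and every other non-bottom
position contributes `1 + x`. There are `k - 1` run ends and `n - k` non-bottom positions. -/

open Finset

theorem Finset.sum_card_filter_mul_pow {α R : Type*} [CommSemiring R] {s : Finset α}
    {f : α → ℕ} {n : ℕ} (hf : ∀ a ∈ s, f a < n) (x : R) :
    ∑ j ∈ range n, (#(s.filter (f · = j)) : R) * x ^ j = ∑ a ∈ s, x ^ f a := by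
  rw [← sum_fiberwise_of_maps_to (g := f) (t := range n) fun a ha => mem_range.2 (hf a ha)]
  refine sum_congr rfl fun j _ => ?_
  rw [sum_congr rfl fun a ha => by rw [(mem_filter.1 ha).2], sum_const, nsmul_eq_mul]

theorem Finset.sum_powerset_pow_card_add_card_sdiff {ι R : Type*} [CommSemiring R]
    [DecidableEq ι] {P N : Finset ι} (hPN : P ⊆ N) (x : R) :
    ∑ S ∈ N.powerset, x ^ (#S + #(P \ S)) = (2 * x) ^ #P * (1 + x) ^ (#N - #P) := by
  have hterm : ∀ S ∈ N.powerset,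
      x ^ (#S + #(P \ S)) = (∏ _i ∈ S, x) * ∏ i ∈ N \ S, if i ∈ P then x else 1 := by
    intro S _
    rw [prod_ite_mem, prod_const, prod_const, pow_add, sdiff_inter_right_comm,
      inter_eq_right.2 hPN]
  calc ∑ S ∈ N.powerset, x ^ (#S + #(P \ S))
      = ∏ i ∈ N, (x + if i ∈ P then x else 1) := by rw [sum_congr rfl hterm, prod_add]
    _ = ∏ i ∈ N, if i ∈ P then 2 * x else 1 + x :=
      prod_congr rfl fun i _ => by split_ifs <;> ring
    _ = (2 * x) ^ #P * (1 + x) ^ (#N - #P) := by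
      rw [prod_ite, prod_const, prod_const, filter_mem_eq_inter, inter_eq_right.2 hPN,
        filter_notMem_eq_sdiff, card_sdiff_of_subset hPN]

theorem length_filter_range (m : ℕ) (p : ℕ → Prop) [DecidablePred p] :
    ((List.range m).filter (fun i => decide (p i))).length = #((range m).filter p) := by
  simp [Finset.range, Finset.filter, Multiset.range, Multiset.filter_coe]

def bottoms (w : List ℤ) : Finset ℕ := (range w.length).filter (IsBottom w)

def nonBottoms (w : List ℤ) : Finset ℕ := (range w.length).filter (¬ IsBottom w ·)

/-- The tops of all mruns but the last one. -/
def runEnds (w : List ℤ) : Finset ℕ := (range (w.length - 1)).filter (IsBottom w <| · + 1)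

section Runs

variable {w : List ℤ} {i : ℕ}

theorem mem_nonBottoms : i ∈ nonBottoms w ↔ i < w.length ∧ ¬ IsBottom w i := by
  simp [nonBottoms]

theorem mem_runEnds : i ∈ runEnds w ↔ i + 1 < w.length ∧ IsBottom w (i + 1) := by
  simp only [runEnds, mem_filter, mem_range, Nat.lt_sub_iff_add_lt]

theorem pos_of_mem_nonBottoms (hi : i ∈ nonBottoms w) : 0 < i :=
  Nat.pos_of_ne_zero fun h => (mem_nonBottoms.1 hi).2 (Or.inl h)

theorem numRuns_eq_card_bottoms (w : List ℤ) : numRuns w = #(bottoms w) :=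
  length_filter_range _ _

theorem card_nonBottoms_add_numRuns (w : List ℤ) :
    #(nonBottoms w) + numRuns w = w.length := by
  rw [numRuns_eq_card_bottoms, add_comm, bottoms, nonBottoms, card_filter_add_card_filter_not,
    card_range]

theorem card_runEnds_add_one (hw : w ≠ []) : #(runEnds w) + 1 = numRuns w := by
  have h : #(runEnds w) = #((bottoms w).erase 0) := by
    refine card_bij (fun i _ => i + 1) (fun i hi => ?_) (fun i _ j _ h => Nat.succ.inj h)
      fun j hj => ?_
    · rw [mem_runEnds] at hi
      simp only [bottoms, mem_erase, mem_filter, mem_range]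
      exact ⟨i.succ_ne_zero, hi⟩
    · simp only [bottoms, mem_erase, mem_filter, mem_range] at hj
      obtain ⟨i, rfl⟩ := Nat.exists_eq_succ_of_ne_zero hj.1
      exact ⟨i, mem_runEnds.2 hj.2, rfl⟩
  have h0 : 0 ∈ bottoms w :=
    mem_filter.2 ⟨mem_range.2 (List.length_pos_of_ne_nil hw), Or.inl rfl⟩
  rw [h, numRuns_eq_card_bottoms, card_erase_add_one h0]

end Runs

theorem des_eq_card (w : List ℤ) :
    des w = #((range (w.length - 1)).filter fun i => w.getD (i + 1) 0 < w.getD i 0) :=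
  length_filter_range _ _

theorem des_le (w : List ℤ) : des w ≤ w.length - 1 := by
  simpa [des] using List.length_filter_le _ (List.range (w.length - 1))

namespace MemR

variable {n : ℕ} {σ : List ℤ} {i j : ℕ}

theorem length_eq (hσ : MemR n σ) : σ.length = n := hσ.1.1

theorem getD_pos_of_isBottom (hσ : MemR n σ) (hi : i < n) (hb : IsBottom σ i) :
    0 < σ.getD i 0 :=
  hσ.2.1 i hi hb

theorem natAbs_pos (hσ : MemR n σ) (hi : i < n) : 0 < (σ.getD i 0).natAbs := by
  obtain ⟨⟨hlen, hperm⟩, -⟩ := hσ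
  have hi' : i < σ.length := by omega
  have hmem := hperm.mem_iff.1 (List.mem_map_of_mem (σ.getElem_mem hi'))
  rw [← List.getD_eq_getElem _ 0 hi', List.mem_range'_1] at hmem
  omega

theorem natAbs_injOn (hσ : MemR n σ) :
    Set.InjOn (fun i => (σ.getD i 0).natAbs) (Set.Iio n) := by
  obtain ⟨⟨hlen, hperm⟩, -⟩ := hσ
  have hnd : (σ.map Int.natAbs).Nodup := hperm.nodup_iff.2 (List.nodup_range' 1 Nat.one_pos)
  intro i hi j hj h
  simp only [Set.mem_Iio] at hi hj
  simp only [List.getD_eq_getElem _ _ (hlen ▸ hi : i < σ.length),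
    List.getD_eq_getElem _ _ (hlen ▸ hj : j < σ.length)] at h
  exact (hnd.getElem_inj_iff (i := i) (j := j) (hi := by simpa [hlen]) (hj := by simpa [hlen])).1
    (by simpa using h)

theorem natAbs_pred_lt (hσ : MemR n σ) (hi : i < n) (hb : ¬ IsBottom σ i) :
    (σ.getD (i - 1) 0).natAbs < (σ.getD i 0).natAbs := by
  simp only [IsBottom, not_or, not_lt] at hb
  exact hb.2.lt_of_ne fun h => hb.1 (by have := hσ.natAbs_injOn (by simp; omega) hi h; omega)

theorem not_isBottom_pred (hσ : MemR n σ) (hj0 : 0 < j) (hj : j < n) (hb : IsBottom σ j) :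
    ¬ IsBottom σ (j - 1) := fun hb' => by
  have := hσ.getD_pos_of_isBottom (by omega) hb'
  have := hσ.2.2.1 (j - 1) j (by omega) hj hb' hb
  have := hσ.2.2.2 j hj0 hj hb
  omega

theorem runEnds_subset_nonBottoms (hσ : MemR n σ) : runEnds σ ⊆ nonBottoms σ := fun i hi => by
  rw [mem_runEnds, hσ.length_eq] at hi
  exact mem_nonBottoms.2
    ⟨by rw [hσ.length_eq]; omega, by simpa using hσ.not_isBottom_pred i.succ_pos hi.1 hi.2⟩

end MemR

def withSigns (σ : List ℤ) (S : Finset ℕ) : List ℤ :=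
  σ.mapIdx fun i a => if i ∈ S then -(a.natAbs : ℤ) else a.natAbs

def orbit (σ : List ℤ) : Finset (List ℤ) := (nonBottoms σ).powerset.image (withSigns σ)

section withSigns

variable {n : ℕ} {σ τ : List ℤ} {S T : Finset ℕ} {i : ℕ}

@[simp]
theorem length_withSigns : (withSigns σ S).length = σ.length := List.length_mapIdx

theorem getD_withSigns (hi : i < σ.length) :
    (withSigns σ S).getD i 0 =
      if i ∈ S then -((σ.getD i 0).natAbs : ℤ) else (σ.getD i 0).natAbs := by
  simp [withSigns, List.getD_eq_getElem?_getD, hi]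

theorem inOrb_withSigns (hσ : MemR n σ) (hS : S ⊆ nonBottoms σ) :
    InOrb σ (withSigns σ S) := by
  refine ⟨length_withSigns, fun i hi => ?_⟩
  rw [hσ.length_eq] at hi
  have := hσ.natAbs_pos hi
  rw [getD_withSigns (hσ.length_eq ▸ hi)]
  refine ⟨by split_ifs <;> omega, fun hb => ?_⟩
  have hiS : i ∉ S := fun h => (mem_nonBottoms.1 (hS h)).2 hb
  have := hσ.getD_pos_of_isBottom hi hb
  rw [if_neg hiS]
  omega

theorem withSigns_filter_neg (hσ : MemR n σ) (hτ : InOrb σ τ) :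
    withSigns σ ((nonBottoms σ).filter (τ.getD · 0 < 0)) = τ := by
  refine List.ext_getElem (by rw [length_withSigns, hτ.1]) fun i h₁ h₂ => ?_
  rw [length_withSigns] at h₁
  rw [← List.getD_eq_getElem _ 0, ← List.getD_eq_getElem _ 0, getD_withSigns h₁]
  have habs := (hτ.2 i h₁).1
  by_cases hb : IsBottom σ i
  · have := (hτ.2 i h₁).2 hb
    have := hσ.getD_pos_of_isBottom (hσ.length_eq ▸ h₁) hb
    simp only [mem_filter, mem_nonBottoms, hb, not_true, and_false, false_and, if_false]
    omega
  · have := hσ.natAbs_pos (hσ.length_eq ▸ h₁)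
    simp only [mem_filter, mem_nonBottoms, h₁, hb, not_false_eq_true, true_and]
    split_ifs <;> omega

theorem subset_of_withSigns_eq (hσ : MemR n σ) (hS : S ⊆ range σ.length)
    (h : withSigns σ S = withSigns σ T) : S ⊆ T := fun i hi => by
  have hi' := mem_range.1 (hS hi)
  have hσi := hσ.natAbs_pos (hσ.length_eq ▸ hi')
  have hgetD := congrArg (·.getD i 0) h
  simp only [getD_withSigns hi', if_pos hi] at hgetD
  by_contra hiT
  rw [if_neg hiT] at hgetD
  omega

theorem withSigns_injOn (hσ : MemR n σ) :
    Set.InjOn (withSigns σ) ((nonBottoms σ).powerset : Set (Finset ℕ)) := fun S hS T hT h => by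
  simp only [coe_powerset, Set.mem_preimage, Set.mem_powerset_iff, coe_subset] at hS hT
  exact (subset_of_withSigns_eq hσ (hS.trans (filter_subset _ _)) h).antisymm
    (subset_of_withSigns_eq hσ (hT.trans (filter_subset _ _)) h.symm)

theorem inOrb_iff_mem_orbit (hσ : MemR n σ) : InOrb σ τ ↔ τ ∈ orbit σ := by
  refine ⟨fun hτ => ?_, fun hτ => ?_⟩
  · exact mem_image.2 ⟨_, mem_powerset.2 (filter_subset _ _), withSigns_filter_neg hσ hτ⟩
  · obtain ⟨S, hS, rfl⟩ := mem_image.1 hτ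
    exact inOrb_withSigns hσ (mem_powerset.1 hS)

theorem descent_withSigns_iff_of_isBottom (hσ : MemR n σ) (hi : i + 1 < n)
    (hb : IsBottom σ (i + 1)) (hS : i + 1 ∉ S) :
    (withSigns σ S).getD (i + 1) 0 < (withSigns σ S).getD i 0 ↔ i ∉ S := by
  have hlen := hσ.length_eq
  have hpos := hσ.getD_pos_of_isBottom hi hb
  have hlt : σ.getD (i + 1) 0 < (σ.getD i 0).natAbs := hσ.2.2.2 _ i.succ_pos hi hb
  rw [getD_withSigns (by omega), getD_withSigns (by omega), if_neg hS]
  by_cases hiS : i ∈ S <;> simp only [hiS, if_true, if_false, not_true_eq_false,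
    not_false_eq_true, iff_true, iff_false, not_lt] <;> omega

theorem descent_withSigns_iff_of_not_isBottom (hσ : MemR n σ) (hi : i + 1 < n)
    (hb : ¬ IsBottom σ (i + 1)) :
    (withSigns σ S).getD (i + 1) 0 < (withSigns σ S).getD i 0 ↔ i + 1 ∈ S := by
  have hlen := hσ.length_eq
  have hlt := hσ.natAbs_pred_lt hi hb
  rw [Nat.add_sub_cancel] at hlt
  rw [getD_withSigns (by omega), getD_withSigns (by omega)]
  by_cases hiS : i + 1 ∈ S <;> simp only [hiS, if_true, if_false, iff_true, iff_false, not_lt] <;>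
    split_ifs <;> omega

theorem descents_withSigns (hσ : MemR n σ) (hS : S ⊆ nonBottoms σ) :
    (range (σ.length - 1)).filter
        (fun i => (withSigns σ S).getD (i + 1) 0 < (withSigns σ S).getD i 0) =
      runEnds σ \ S ∪ S.image (· - 1) := by
  have hlen := hσ.length_eq
  have hS' : ∀ j ∈ S, 0 < j ∧ j < n ∧ ¬ IsBottom σ j := fun j hj =>
    ⟨pos_of_mem_nonBottoms (hS hj), hlen ▸ (mem_nonBottoms.1 (hS hj)).1,
      (mem_nonBottoms.1 (hS hj)).2⟩
  ext i
  simp only [mem_filter, mem_range, mem_union, mem_sdiff, mem_runEnds, mem_image]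
  by_cases hi : i + 1 < n
  · by_cases hb : IsBottom σ (i + 1)
    · rw [descent_withSigns_iff_of_isBottom hσ hi hb fun h => (hS' _ h).2.2 hb]
      refine ⟨fun h => Or.inl ⟨⟨by omega, hb⟩, h.2⟩, ?_⟩
      rintro (h | ⟨j, hj, rfl⟩)
      · exact ⟨by omega, h.2⟩
      · obtain ⟨hj0, -, hjb⟩ := hS' j hj
        exact absurd (by rwa [Nat.sub_add_cancel hj0] at hb) hjb
    · rw [descent_withSigns_iff_of_not_isBottom hσ hi hb]
      refine ⟨fun h => Or.inr ⟨i + 1, h.2, rfl⟩, ?_⟩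
      rintro (h | ⟨j, hj, rfl⟩)
      · exact absurd h.1.2 hb
      · have := hS' j hj
        exact ⟨by omega, by rwa [Nat.sub_add_cancel this.1]⟩
  · refine iff_of_false (by omega) ?_
    rintro (h | ⟨j, hj, rfl⟩)
    · omega
    · have := hS' j hj
      omega

theorem des_withSigns (hσ : MemR n σ) (hS : S ⊆ nonBottoms σ) :
    des (withSigns σ S) = #S + #(runEnds σ \ S) := by
  have hdisj : Disjoint (runEnds σ \ S) (S.image (· - 1)) := by
    refine disjoint_left.2 fun i hi hi' => ?_
    obtain ⟨j, hj, rfl⟩ := mem_image.1 hi'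
    rw [mem_sdiff, mem_runEnds, Nat.sub_add_cancel (pos_of_mem_nonBottoms (hS hj))] at hi
    exact (mem_nonBottoms.1 (hS hj)).2 hi.1.2
  have hinj : Set.InjOn (· - 1) (S : Set ℕ) := fun i hi j hj h => by
    have := pos_of_mem_nonBottoms (hS hi)
    have := pos_of_mem_nonBottoms (hS hj)
    simp only at h
    omega
  rw [des_eq_card, length_withSigns, descents_withSigns hσ hS, card_union_of_disjoint hdisj,
    card_image_of_injOn hinj, add_comm]

end withSigns

/-- For `σ ∈ R_n^B` with `k` mruns, the descent generating polynomial of the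
valley-hopping orbit of `σ` is `(2x)^{k-1} (1+x)^{n-2k+1}`. -/
theorem orbit_descent_polynomial (n : ℕ) (hn : 1 ≤ n) (σ : List ℤ) (hσ : MemR n σ)
    (x : ℝ) :
    ∑ j ∈ Finset.range n,
        (Nat.card {τ : List ℤ // InOrb σ τ ∧ des τ = j} : ℝ) * x ^ j
      = (2 * x) ^ (numRuns σ - 1) * (1 + x) ^ (n + 1 - 2 * numRuns σ) := by
  have hlen := hσ.length_eq
  have hruns := card_runEnds_add_one (List.ne_nil_of_length_pos (hlen ▸ hn))
  have hsizes := card_nonBottoms_add_numRuns σ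
  have hcard (j : ℕ) : Nat.card {τ : List ℤ // InOrb σ τ ∧ des τ = j} =
      #((orbit σ).filter (des · = j)) := by
    rw [← Nat.card_eq_finsetCard]
    exact Nat.card_congr (Equiv.subtypeEquivRight fun τ => by
      rw [mem_filter, inOrb_iff_mem_orbit hσ])
  have hdes (τ : List ℤ) (hτ : τ ∈ orbit σ) : des τ < n := by
    have := des_le τ
    have := ((inOrb_iff_mem_orbit hσ).2 hτ).1
    omega
  simp_rw [hcard]
  rw [sum_card_filter_mul_pow hdes, orbit, sum_image (withSigns_injOn hσ),
    sum_congr rfl fun S hS => by rw [des_withSigns hσ (mem_powerset.1 hS)],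
    sum_powerset_pow_card_add_card_sdiff hσ.runEnds_subset_nonBottoms]
  congr 2 <;> omega
end
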